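/- arXiv:2511.00691 — 7 statements merged into one kernel-verified Lean document; each statement's English description precedes it below -/
import Mathlib

section
/- Every commutative cancellative monoid with the IDF property (every element has only finitely many irreducible divisors up to associates) is a U-FFM, i.e., every atomic element has only finitely many factorizations. -/
/-- The set of factorizations of `a`: multisets of atoms (irreducible elements), counted up
to associates, whose product is associated to `a`. -/
def FactorizationsOf {α : Type*} [CommMonoid α] (a : α) : Set (Multiset (Associates α)) :=
  {s | (∀ p ∈ s, Irreducible p) ∧ s.prod = Associates.mk a}

/-- An element is atomic if it is a unit or a finite product of atoms; equivalently, some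
finite multiset of atoms has product associated to it. -/
def IsAtomicElem {α : Type*} [CommMonoid α] (a : α) : Prop :=
  ∃ s : Multiset α, (∀ p ∈ s, Irreducible p) ∧ Associated s.prod a

/-- A monoid has the IDF property if every element is divisible by only finitely many
atoms up to associates. -/
def IsIDFMonoid (α : Type*) [CommMonoid α] : Prop :=
  ∀ a : α, {p : Associates α | Irreducible p ∧ p ∣ Associates.mk a}.Finite

/-!
The atoms occurring in factorizations of `a` all divide `a`, so by the IDF property they range
over a finite set. Factorizations of `a` are pairwise incomparable as multisets: if `s ≤ t` have
the same product then, by cancellation, `t - s` is a multiset of atoms with product `1`, hence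
empty. Multisets over a finite set are well-quasi-ordered (Dickson's lemma), and an antichain in
a well-quasi-order is finite.
-/

namespace Associates

instance instCancelCommMonoid {M : Type*} [CancelCommMonoid M] :
    CancelCommMonoid (Associates M) where
  mul_left_cancel := by
    rintro ⟨a⟩ ⟨b⟩ ⟨c⟩ h
    obtain ⟨u, hu⟩ := (mk_eq_mk_iff_associated (a := a * b) (b := a * c)).1 h
    exact mk_eq_mk_iff_associated.2 ⟨u, mul_left_cancel (a := a) (by rw [← mul_assoc, hu])⟩

end Associates

namespace Multiset

instance wellQuasiOrderedLE {α : Type*} [Finite α] : WellQuasiOrderedLE (Multiset α) := by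
  classical
  exact Finsupp.orderIsoMultiset.wellQuasiOrderedLE_iff.1 inferInstance

theorem isPWO_of_forall_mem {α : Type*} {S : Set (Multiset α)} {F : Set α}
    (hF : F.Finite) (hS : ∀ s ∈ S, ∀ p ∈ s, p ∈ F) : S.IsPWO := by
  have : Finite F := hF
  refine ((Set.univ : Set (Multiset F)).isPWO_of_wellQuasiOrderedLE.image_of_monotone
    (f := map Subtype.val) fun _ _ ↦ map_le_map).mono fun s hs ↦ ?_
  lift s to Multiset F using hS s hs
  exact ⟨s, trivial, rfl⟩

theorem eq_of_le_of_prod_eq {α : Type*} [CancelCommMonoid α] {s t : Multiset α}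
    (ht : ∀ p ∈ t, ¬IsUnit p) (hst : s ≤ t) (hprod : s.prod = t.prod) : s = t := by
  obtain ⟨u, rfl⟩ := le_iff_exists_add.1 hst
  have hu : u.prod = 1 := by rwa [prod_add, left_eq_mul] at hprod
  have hu0 : u = 0 := eq_zero_of_forall_notMem fun p hp ↦
    ht p (mem_add.2 (Or.inr hp)) (isUnit_of_dvd_one (hu ▸ dvd_prod hp))
  rw [hu0, add_zero]

theorem isAntichain_setOf_prod_eq {α : Type*} [CancelCommMonoid α] (a : α) :
    IsAntichain (· ≤ ·) {s : Multiset α | (∀ p ∈ s, ¬IsUnit p) ∧ s.prod = a} :=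
  fun _ hs _ ht hne hle ↦ hne (eq_of_le_of_prod_eq ht.1 hle (hs.2.trans ht.2.symm))

end Multiset

theorem isAntichain_factorizationsOf {M : Type*} [CancelCommMonoid M] (a : M) :
    IsAntichain (· ≤ ·) (FactorizationsOf a) :=
  (Multiset.isAntichain_setOf_prod_eq (Associates.mk a)).subset
    fun _ hs ↦ ⟨fun p hp ↦ (hs.1 p hp).not_isUnit, hs.2⟩

theorem irreducible_and_dvd_of_mem_factorizationsOf {M : Type*} [CommMonoid M] {a : M}
    {s : Multiset (Associates M)} (hs : s ∈ FactorizationsOf a) {p : Associates M} (hp : p ∈ s) :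
    Irreducible p ∧ p ∣ Associates.mk a :=
  ⟨hs.1 p hp, hs.2 ▸ Multiset.dvd_prod hp⟩

/-- Every commutative cancellative monoid with the IDF property is a U-FFM:
every atomic element has only finitely many factorizations. -/
theorem idf_is_uffm (M : Type*) [CancelCommMonoid M] (h : IsIDFMonoid M) :
    ∀ a : M, IsAtomicElem a → (FactorizationsOf a).Finite := by
  intro a _
  exact (isAntichain_factorizationsOf a).finite_of_partiallyWellOrderedOn
    (Multiset.isPWO_of_forall_mem (h a)
      fun _ hs _ hp ↦ irreducible_and_dvd_of_mem_factorizationsOf hs hp)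
end

section
/- Every finite factorization monoid is MCD-finite: if M is a commutative cancellative monoid in which every element has a nonempty finite set of factorizations, then every nonempty finite subset of M has only finitely many maximal common divisors up to associates. -/
/-- `d` is a maximal common divisor (MCD) of a set `S` if `d` is a common divisor of `S`
and the only common divisors of `{s/d : s ∈ S}` are the units, i.e. whenever `d * e`
divides every element of `S`, `e` is a unit. -/
def IsMCD {α : Type*} [CommMonoid α] (S : Set α) (d : α) : Prop :=
  (∀ s ∈ S, d ∣ s) ∧ ∀ e : α, (∀ s ∈ S, d * e ∣ s) → IsUnit e

/-- Every finite factorization monoid is MCD-finite: if every element of the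
commutative cancellative monoid `M` has a nonempty finite set of factorizations, then every
nonempty finite subset of `M` has only finitely many MCDs up to associates. -/
theorem ffm_is_mcd_finite (M : Type*) [CancelCommMonoid M]
    (h : ∀ a : M, (FactorizationsOf a).Nonempty ∧ (FactorizationsOf a).Finite) :
    ∀ S : Finset M, S.Nonempty →
      (Associates.mk '' {d : M | IsMCD (↑S : Set M) d}).Finite := by
  classical
  intro S hS
  obtain ⟨s₀, hs₀⟩ := hS
  -- Every MCD of S divides s₀; divisors of s₀ (up to associates) are products of
  -- sub-multisets of the finitely many factorizations of s₀.
  apply Set.Finite.subset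
    (s := ⋃ f ∈ FactorizationsOf s₀, Multiset.prod '' {t : Multiset (Associates M) | t ≤ f})
  · refine Set.Finite.biUnion (h s₀).2 fun f _ => Set.Finite.image _ ?_
    refine Set.Finite.subset f.powerset.toFinset.finite_toSet fun t ht => ?_
    exact Multiset.mem_toFinset.2 (Multiset.mem_powerset.2 ht)
  · rintro x ⟨d, hd, rfl⟩
    obtain ⟨e, he⟩ := hd.1 s₀ (by exact_mod_cast hs₀)
    obtain ⟨sd, hsd⟩ := (h d).1
    obtain ⟨se, hse⟩ := (h e).1
    have hmem : sd + se ∈ FactorizationsOf s₀ := by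
      constructor
      · intro p hp
        rcases Multiset.mem_add.1 hp with hp | hp
        · exact hsd.1 p hp
        · exact hse.1 p hp
      · rw [Multiset.prod_add, hsd.2, hse.2, Associates.mk_mul_mk, ← he]
    refine Set.mem_biUnion hmem ⟨sd, ?_, hsd.2⟩
    exact Multiset.le_add_right _ _
end

section
/- There exists an integral domain R that is an IDF domain but is neither a bounded factorization domain nor an MCD-finite domain. -/
/-- An integral domain is an IDF domain if every nonzero element is divisible by only
finitely many atoms up to associates. -/
def IsIDFDomain (R : Type*) [CommRing R] : Prop :=
  ∀ a : R, a ≠ 0 → {p : Associates R | Irreducible p ∧ p ∣ Associates.mk a}.Finite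

/-- An integral domain is a bounded factorization domain (BFD) if every nonzero element has
a nonempty finite set of factorization lengths. -/
def IsBFD (R : Type*) [CommRing R] : Prop :=
  ∀ a : R, a ≠ 0 →
    (Multiset.card '' FactorizationsOf a).Nonempty ∧ (Multiset.card '' FactorizationsOf a).Finite

/-- An integral domain is MCD-finite if every nonempty finite set of nonzero elements has
only finitely many maximal common divisors up to associates. -/
def IsMCDFiniteDomain (R : Type*) [CommRing R] : Prop :=
  ∀ S : Finset R, S.Nonempty → (∀ s ∈ S, s ≠ (0 : R)) →
    (Associates.mk '' {d : R | IsMCD (↑S : Set R) d}).Finite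


/-! The witness is `𝔽₂[M]` for the monoid `M` of rational points of the cone
`0 ≤ a, b, c` and `c ≤ a + b` in `ℚ³`. Since `M` is `2`-divisible and the Frobenius map is
additive, every element of `𝔽₂[M]` is a square, so there are no atoms at all: the ring is
vacuously IDF, and a nonzero nonunit has no factorization. Since `M` embeds in a `ℚ`-vector
space, divisors of monomials are monomials, so MCDs of monomials are computed in `M`; as the cone
has four extreme rays it is not simplicial, and `(1,1,1)`, `(1,1,0)` have the infinitely many
maximal common divisors `(t, 1 - t, 0)`, `0 ≤ t ≤ 1`. -/

open AddMonoidAlgebra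

theorem factorizationsOf_eq_empty {α : Type*} [CommMonoidWithZero α]
    (hα : ∀ p : α, ¬Irreducible p) {a : α} (ha : ¬IsUnit a) : FactorizationsOf a = ∅ := by
  refine Set.eq_empty_of_forall_notMem fun s ⟨hirr, hprod⟩ => ?_
  rcases Multiset.empty_or_exists_mem s with rfl | ⟨p, hp⟩
  · exact ha (Associates.mk_eq_one.mp (by simpa using hprod.symm))
  · obtain ⟨b, rfl⟩ := Associates.mk_surjective p
    exact hα b (Associates.irreducible_mk.mp (hirr _ hp))

theorem isIDFDomain_of_forall_not_irreducible {R : Type*} [CommRing R]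
    (hR : ∀ p : R, ¬Irreducible p) : IsIDFDomain R :=
  fun _ _ => Set.Finite.subset Set.finite_empty fun p ⟨hp, _⟩ => by
    obtain ⟨b, rfl⟩ := Associates.mk_surjective p
    exact hR b (Associates.irreducible_mk.mp hp)

theorem not_isBFD_of_forall_not_irreducible {R : Type*} [CommRing R]
    (hR : ∀ p : R, ¬Irreducible p) {a : R} (ha₀ : a ≠ 0) (ha : ¬IsUnit a) : ¬IsBFD R :=
  fun hBFD => by simpa [factorizationsOf_eq_empty hR ha] using (hBFD a ha₀).1

namespace AddMonoidAlgebra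

variable {k M : Type*}

theorem isSquare_of_charTwo [CommSemiring k] [CharP k 2] [AddCommMonoid M]
    (hk : ∀ c : k, IsSquare c) (hM : ∀ m : M, Even m) (f : k[M]) : IsSquare f := by
  have : CharP k[M] 2 := charP_of_injective_algebraMap single_right_injective 2
  induction f using induction_linear with
  | zero => exact ⟨0, (mul_zero 0).symm⟩
  | add f g hf hg =>
    obtain ⟨a, rfl⟩ := hf
    obtain ⟨b, rfl⟩ := hg
    exact ⟨a + b, (CharTwo.add_mul_self a b).symm⟩
  | single m c =>
    obtain ⟨n, rfl⟩ := hM m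
    obtain ⟨d, rfl⟩ := hk c
    exact ⟨single n d, (single_mul_single n n d d).symm⟩

theorem exists_eq_single_of_mul_eq_single [Semiring k] [NoZeroDivisors k] [Add M]
    [TwoUniqueSums M] {f g : k[M]} {m : M} {c : k} (hc : c ≠ 0) (h : f * g = single m c) :
    ∃ a b : M, ∃ x y : k, f = single a x ∧ g = single b y := by
  classical
  have hfg : f * g ≠ 0 := h ▸ single_ne_zero.mpr hc
  have hf : f.coeff.support.Nonempty :=
    Finsupp.support_nonempty_iff.mpr (coeff_eq_zero.not.mpr (left_ne_zero_of_mul hfg))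
  have hg : g.coeff.support.Nonempty :=
    Finsupp.support_nonempty_iff.mpr (coeff_eq_zero.not.mpr (right_ne_zero_of_mul hfg))
  -- a pair with a unique sum contributes a nonzero coefficient to `f * g`, hence sums to `m`
  have sum_eq {a b : M} (ha : a ∈ f.coeff.support) (hb : b ∈ g.coeff.support)
      (hab : UniqueAdd f.coeff.support g.coeff.support a b) : a + b = m := by
    have := coeff_mul_add_of_uniqueAdd hab
    rw [h, coeff_single] at this
    by_contra hne
    rw [Finsupp.single_eq_of_ne hne] at this
    exact mul_ne_zero (Finsupp.mem_support_iff.mp ha) (Finsupp.mem_support_iff.mp hb) this.symm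
  have hcard : f.coeff.support.card * g.coeff.support.card ≤ 1 := by
    by_contra! hlt
    obtain ⟨p, hp, q, hq, hpq, hpu, hqu⟩ := TwoUniqueSums.uniqueAdd_of_one_lt_card hlt
    rw [Finset.mem_product] at hp hq
    have := hpu hq.1 hq.2 ((sum_eq hq.1 hq.2 hqu).trans (sum_eq hp.1 hp.2 hpu).symm)
    exact hpq (Prod.ext this.1 this.2).symm
  have : Nonempty M := ⟨m⟩
  obtain ⟨a, x, hfa⟩ := Finsupp.card_support_le_one'.mp
    ((Nat.le_mul_of_pos_right _ hg.card_pos).trans hcard)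
  obtain ⟨b, y, hgb⟩ := Finsupp.card_support_le_one'.mp
    ((Nat.le_mul_of_pos_left _ hf.card_pos).trans hcard)
  exact ⟨a, b, x, y, coeff_injective hfa, coeff_injective hgb⟩

end AddMonoidAlgebra

instance AddSubmonoid.twoUniqueSums {G : Type*} [AddMonoid G] [TwoUniqueSums G]
    (S : AddSubmonoid G) : TwoUniqueSums S :=
  .of_injective_addHom S.subtype.toAddHom Subtype.coe_injective inferInstance

def cone : AddSubmonoid (ℚ × ℚ × ℚ) where
  carrier := {v | 0 ≤ v.1 ∧ 0 ≤ v.2.1 ∧ 0 ≤ v.2.2 ∧ v.2.2 ≤ v.1 + v.2.1}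
  zero_mem' := by simp
  add_mem' := by
    rintro ⟨a₀, a₁, a₂⟩ ⟨b₀, b₁, b₂⟩ ⟨ha₀, ha₁, ha₂, ha⟩ ⟨hb₀, hb₁, hb₂, hb⟩
    refine ⟨?_, ?_, ?_, ?_⟩ <;> dsimp only [Prod.mk_add_mk] at * <;> linarith

theorem mem_cone {a b c : ℚ} : (a, b, c) ∈ cone ↔ 0 ≤ a ∧ 0 ≤ b ∧ 0 ≤ c ∧ c ≤ a + b :=
  Iff.rfl

namespace cone

theorem even (m : cone) : Even m := by
  obtain ⟨⟨a, b, c⟩, ha, hb, hc, habc⟩ := m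
  refine ⟨⟨(a / 2, b / 2, c / 2),
    mem_cone.mpr ⟨by linarith, by linarith, by linarith, by linarith⟩⟩, ?_⟩
  ext <;> simp

theorem eq_zero_of_add_eq_zero : ∀ {m n : cone}, m + n = 0 → m = 0
  | ⟨⟨a, b, c⟩, ha, hb, hc, _⟩, ⟨⟨a', b', c'⟩, ha', hb', hc', _⟩, h => by
    simp only [Subtype.ext_iff, AddSubmonoid.coe_add, Prod.mk_add_mk, ZeroMemClass.coe_zero,
      Prod.zero_eq_mk, Prod.mk.injEq] at h ⊢
    dsimp only at *
    refine ⟨?_, ?_, ?_⟩ <;> linarith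

def s₁ : cone := ⟨(1, 1, 1), by norm_num [mem_cone]⟩

def s₂ : cone := ⟨(1, 1, 0), by norm_num [mem_cone]⟩

def mcd (t : Set.Icc (0 : ℚ) 1) : cone :=
  ⟨(t, 1 - t, 0), mem_cone.mpr ⟨t.2.1, by linarith [t.2.2], le_rfl, by linarith⟩⟩

theorem mcd_injective : Function.Injective mcd := fun t t' h => by
  simpa [mcd, Subtype.ext_iff] using congrArg (fun m : cone => (m : ℚ × ℚ × ℚ).1) h

theorem exists_mcd_add_eq_s₁ (t : Set.Icc (0 : ℚ) 1) : ∃ r, mcd t + r = s₁ :=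
  ⟨⟨(1 - t, t, 1), mem_cone.mpr ⟨by linarith [t.2.2], t.2.1, zero_le_one, by linarith⟩⟩, by
    ext <;> simp [mcd, s₁]⟩

theorem exists_mcd_add_eq_s₂ (t : Set.Icc (0 : ℚ) 1) : ∃ r, mcd t + r = s₂ :=
  ⟨⟨(1 - t, t, 0), mem_cone.mpr ⟨by linarith [t.2.2], t.2.1, le_rfl, by linarith [t.2.2]⟩⟩, by
    ext <;> simp [mcd, s₂]⟩

/-- Maximality of the common divisor `mcd t` of `s₁` and `s₂`. -/
theorem eq_zero_of_mcd_add {t : Set.Icc (0 : ℚ) 1} :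
    ∀ {w r₁ r₂ : cone}, mcd t + w + r₁ = s₁ → mcd t + w + r₂ = s₂ → w = 0
  | ⟨⟨w₀, w₁, w₂⟩, hw₀, hw₁, hw₂, _⟩, ⟨⟨a₀, a₁, a₂⟩, ha₀, ha₁, _, ha⟩,
      ⟨⟨b₀, b₁, b₂⟩, _, _, hb₂, _⟩, h₁, h₂ => by
    simp only [mcd, s₁, s₂, Subtype.ext_iff, AddSubmonoid.coe_add, Prod.mk_add_mk,
      ZeroMemClass.coe_zero, Prod.zero_eq_mk, Prod.mk.injEq] at h₁ h₂ ⊢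
    dsimp only at *
    refine ⟨?_, ?_, ?_⟩ <;> linarith

end cone

abbrev ConeAlgebra : Type := AddMonoidAlgebra (ZMod 2) cone

namespace ConeAlgebra

open cone

noncomputable def X (m : cone) : ConeAlgebra := single m 1

theorem X_add (m n : cone) : X (m + n) = X m * X n := by
  rw [X, X, X, single_mul_single, mul_one]

theorem X_zero : X 0 = 1 := rfl

theorem X_injective : Function.Injective X := single_left_injective one_ne_zero

theorem X_ne_zero (m : cone) : X m ≠ 0 := single_ne_zero.mpr one_ne_zero

theorem eq_X_of_dvd_X {f : ConeAlgebra} {m : cone} (h : f ∣ X m) :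
    ∃ a b, a + b = m ∧ f = X a := by
  obtain ⟨g, hg⟩ := h
  obtain ⟨a, b, x, y, rfl, rfl⟩ := exists_eq_single_of_mul_eq_single one_ne_zero hg.symm
  have eq_one (z : ZMod 2) (hz : z ≠ 0) : z = 1 := by revert z; decide
  obtain rfl := eq_one x (by rintro rfl; simp [X_ne_zero] at hg)
  obtain rfl := eq_one y (by rintro rfl; simp [X_ne_zero] at hg)
  exact ⟨a, b, X_injective (hg.trans (X_add a b).symm).symm, rfl⟩

instance : Subsingleton ConeAlgebraˣ where
  allEq u v := by
    suffices ∀ u : ConeAlgebraˣ, u = 1 by rw [this u, this v]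
    intro u
    obtain ⟨a, b, hab, hu⟩ := eq_X_of_dvd_X (m := 0) u.isUnit.dvd
    rw [eq_zero_of_add_eq_zero hab, X_zero] at hu
    exact Units.ext hu

theorem not_irreducible (f : ConeAlgebra) : ¬Irreducible f :=
  (isSquare_of_charTwo (by decide) cone.even f).not_irreducible

theorem isMCD_X_mcd (t : Set.Icc (0 : ℚ) 1) : IsMCD {X s₁, X s₂} (X (mcd t)) := by
  refine ⟨?_, fun e he => ?_⟩
  · rintro s (rfl | rfl)
    · obtain ⟨r, hr⟩ := exists_mcd_add_eq_s₁ t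
      exact ⟨X r, by rw [← X_add, hr]⟩
    · obtain ⟨r, hr⟩ := exists_mcd_add_eq_s₂ t
      exact ⟨X r, by rw [← X_add, hr]⟩
  obtain ⟨a₁, r₁, hr₁, hda₁⟩ := eq_X_of_dvd_X (he _ (Set.mem_insert _ _))
  obtain ⟨a₂, r₂, hr₂, hda₂⟩ := eq_X_of_dvd_X (he _ (Set.mem_insert_of_mem _ rfl))
  obtain ⟨w, -, -, rfl⟩ := eq_X_of_dvd_X (Dvd.intro_left _ hda₁)
  rw [← X_add] at hda₁ hda₂
  have h₁ : mcd t + w + r₁ = s₁ := by rw [X_injective hda₁, hr₁]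
  have h₂ : mcd t + w + r₂ = s₂ := by rw [X_injective hda₂, hr₂]
  rw [eq_zero_of_mcd_add h₁ h₂, X_zero]
  exact isUnit_one

end ConeAlgebra

/-- There exists an integral domain that is an IDF domain but is neither a
bounded factorization domain nor an MCD-finite domain. -/
theorem exists_idf_domain_not_bfd_not_mcd_finite :
    ∃ (R : Type) (_ : CommRing R) (_ : IsDomain R),
      IsIDFDomain R ∧ ¬ IsBFD R ∧ ¬ IsMCDFiniteDomain R := by
  open ConeAlgebra cone in
  refine ⟨ConeAlgebra, inferInstance, inferInstance,
    isIDFDomain_of_forall_not_irreducible not_irreducible,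
    not_isBFD_of_forall_not_irreducible not_irreducible (X_ne_zero s₁) ?_, fun hfin => ?_⟩
  · rw [isUnit_iff_eq_one, ← X_zero, X_injective.eq_iff]
    simp [s₁, Subtype.ext_iff]
  · have : Infinite (Set.Icc (0 : ℚ) 1) := Set.Icc.infinite zero_lt_one
    refine Set.infinite_of_injective_forall_mem (f := Associates.mk ∘ X ∘ mcd)
      (Associates.mk_injective.comp (X_injective.comp mcd_injective))
      (fun t => Set.mem_image_of_mem Associates.mk ?_)
      (hfin {X s₁, X s₂} (by simp) (by simp [X_ne_zero]))
    simpa using isMCD_X_mcd t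
end

section
/- For every ℓ ∈ ℕ≥1 ∪ {∞}, there exists an integral domain R that is an IDF domain, is not atomic, and contains exactly ℓ irreducible elements up to associates (i.e., the set of associate classes of irreducible elements of R has cardinality ℓ when ℓ is finite, and is countably infinite when ℓ = ∞). -/
/-!
For an algebra `B` over a field `K` with augmentation `ε : B →ₐ[K] K` and a subring `D` of `K`
that is not a field, consider `R = ε⁻¹(D) = D + ker ε` (`AlgHom.comapSubring`). A nonzero nonunit
`d ∈ D` divides every element of `ker ε`, so atoms of `R` have nonzero augmentation and `X ∈ ker ε`
is not a product of atoms. Splitting `f = ε(f) · (ε(f)⁻¹ f)` shows that an atom either has unit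
augmentation or is associated to an atom of `D`.

For `B = ℚ⟦X⟧` series with unit augmentation are units, so the atoms of `R` are those of `D`; for
`D = ℤ_S` (`Rat.integralAt S`) with `S` a set of `n` primes these are the `n` primes of `S`, and
finitely many atoms make `R` IDF. For `B = ℚ[X]` and `D = ℤ_(2)` the atoms `1 + aX` are pairwise
non-associated, and `R` is still IDF: atoms with unit augmentation that are associated in `ℚ[X]`
are associated in `R`, and a nonzero polynomial has finitely many divisors up to associates.
-/

namespace Associates

variable {M N : Type*} [CommMonoid M] [CommMonoid N]

def map (f : M →* N) : Associates M → Associates N :=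
  Quotient.map' f fun _ _ h => h.map f

@[simp]
theorem map_mk (f : M →* N) (a : M) : map f (Associates.mk a) = Associates.mk (f a) := rfl

theorem map_injective_of_leftInverse {f : M →* N} {g : N →* M} (h : ∀ a, g (f a) = a) :
    Function.Injective (map f) := by
  refine Function.LeftInverse.injective (g := map g) fun x => ?_
  obtain ⟨a, rfl⟩ := mk_surjective x
  simp [h]

theorem encard_setOf_irreducible_eq_of_retraction {M N : Type*} [CommMonoidWithZero M]
    [CommMonoidWithZero N] (ι : M →* N) (ε : N →* M) (hε : ∀ x, IsUnit (ε x) → IsUnit x)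
    (hι : ∀ a, ε (ι a) = a) (h : ∀ x, Irreducible x → Associated (ι (ε x)) x) :
    {p : Associates N | Irreducible p}.encard = {q : Associates M | Irreducible q}.encard := by
  have : IsLocalHom ε := ⟨hε⟩
  have : IsLocalHom ι := ⟨fun a ha => by simpa [hι] using ha.map ε⟩
  have : {p : Associates N | Irreducible p} = map ι '' {q | Irreducible q} := by
    ext p
    obtain ⟨x, rfl⟩ := mk_surjective p
    simp only [Set.mem_ofPred_eq, Set.mem_image, irreducible_mk]
    constructor
    · intro hx
      refine ⟨Associates.mk (ε x), irreducible_mk.2 ((h x hx).symm.irreducible hx).of_map, ?_⟩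
      exact mk_eq_mk_iff_associated.2 (h x hx)
    · rintro ⟨q, hq, hqx⟩
      obtain ⟨a, rfl⟩ := mk_surjective q
      rw [map_mk, mk_eq_mk_iff_associated] at hqx
      exact hqx.irreducible <|
        Irreducible.of_map (f := ε) (by simpa [hι] using irreducible_mk.1 hq)
  rw [this, (map_injective_of_leftInverse hι).encard_image]

theorem finite_setOf_dvd_mk {M : Type*} [CommMonoidWithZero M] [UniqueFactorizationMonoid M]
    {a : M} (ha : a ≠ 0) : {d : Associates M | d ∣ Associates.mk a}.Finite :=
  @Set.toFinite _ _ <| @Finite.of_fintype _ <|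
    UniqueFactorizationMonoid.fintypeSubtypeDvd (Associates.mk a) (mk_ne_zero.2 ha)

instance {M : Type*} [Monoid M] [Countable M] : Countable (Associates M) :=
  Quotient.countable

end Associates

theorem not_isAtomicElem_of_map_eq_zero {M M₀ F : Type*} [CommMonoid M] [CommMonoidWithZero M₀]
    [NoZeroDivisors M₀] [Nontrivial M₀] [FunLike F M M₀] [MonoidHomClass F M M₀] (φ : F)
    (hφ : ∀ p, Irreducible p → φ p ≠ 0) {x : M} (hx : φ x = 0) : ¬ IsAtomicElem x := by
  rintro ⟨s, hs, u, hu⟩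
  have : φ (s.prod * u) ≠ 0 := by
    rw [map_mul, map_multiset_prod]
    refine mul_ne_zero (Multiset.prod_ne_zero fun h0 => ?_) (u.isUnit.map φ).ne_zero
    obtain ⟨p, hp, hp0⟩ := Multiset.mem_map.1 h0
    exact hφ p (hs p hp) hp0
  exact this (hu ▸ hx)

theorem isIDFDomain_of_finite_setOf_irreducible {R : Type*} [CommRing R]
    (h : {p : Associates R | Irreducible p}.Finite) : IsIDFDomain R :=
  fun _ _ => h.subset fun _ hp => hp.1

instance Nat.Primes.fact_prime (p : Nat.Primes) : Fact (p : ℕ).Prime := ⟨p.2⟩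

theorem padicValRat_primes_eq_ite (p q : Nat.Primes) :
    padicValRat p (q : ℕ) = if p = q then 1 else 0 := by
  split_ifs with h
  · subst h
    exact padicValRat.self p.2.one_lt
  · rw [padicValRat.of_nat, padicValNat_primes (Subtype.coe_injective.ne h), Nat.cast_zero]

namespace Rat

def integralAt (S : Set Nat.Primes) : Subring ℚ where
  carrier := {q | ∀ p ∈ S, 0 ≤ padicValRat p q}
  mul_mem' {a b} ha hb p hp := by
    rcases eq_or_ne a 0 with rfl | ha0
    · simp
    rcases eq_or_ne b 0 with rfl | hb0
    · simp
    rw [padicValRat.mul ha0 hb0]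
    exact add_nonneg (ha p hp) (hb p hp)
  one_mem' _ _ := by simp
  add_mem' {a b} ha hb p hp := by
    rcases eq_or_ne (a + b) 0 with hab | hab
    · simp [hab]
    exact (le_min (ha p hp) (hb p hp)).trans (padicValRat.min_le_padicValRat_add hab)
  zero_mem' _ _ := by simp
  neg_mem' {a} ha p hp := by simpa [padicValRat.neg] using ha p hp

variable {S : Set Nat.Primes}

theorem isUnit_integralAt_iff {a : integralAt S} (ha : a ≠ 0) :
    IsUnit a ↔ ∀ p ∈ S, padicValRat p a = 0 := by
  have ha' : (a : ℚ) ≠ 0 := by exact_mod_cast ha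
  constructor
  · rintro ⟨u, rfl⟩ p hp
    have hu : ((u : integralAt S) : ℚ) * ((u⁻¹ : (integralAt S)ˣ) : integralAt S) = 1 := by
      exact_mod_cast u.mul_inv
    have hv := congrArg (padicValRat p) hu
    rw [padicValRat.mul (left_ne_zero_of_mul_eq_one hu) (right_ne_zero_of_mul_eq_one hu),
      padicValRat.one] at hv
    have := (u : integralAt S).2 p hp
    have := (u⁻¹ : (integralAt S)ˣ).1.2 p hp
    omega
  · intro hv
    refine IsUnit.of_mul_eq_one (b := ⟨(a : ℚ)⁻¹, fun p hp => ?_⟩)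
      (Subtype.ext (mul_inv_cancel₀ ha'))
    simp [padicValRat.inv, hv p hp]

theorem natCast_dvd_integralAt_iff {p : Nat.Primes} (hp : p ∈ S) {a : integralAt S}
    (ha : a ≠ 0) :
    ((p : ℕ) : integralAt S) ∣ a ↔ 1 ≤ padicValRat p a := by
  have hp0 : ((p : ℕ) : ℚ) ≠ 0 := by exact_mod_cast p.2.ne_zero
  constructor
  · rintro ⟨b, rfl⟩
    have hb : (b : ℚ) ≠ 0 := by rintro h; exact ha (by simp [Subtype.ext_iff, h])
    rw [Subring.coe_mul, Subring.coe_natCast, padicValRat.mul hp0 hb, padicValRat.self p.2.one_lt]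
    simpa using b.2 p hp
  · intro hv
    refine ⟨⟨a / (p : ℕ), fun q hq => ?_⟩, Subtype.ext (mul_div_cancel₀ _ hp0).symm⟩
    rw [padicValRat.div (by exact_mod_cast ha) hp0, padicValRat_primes_eq_ite]
    split_ifs with h
    · subst h; linarith
    · simpa using a.2 q hq

theorem natCast_ne_zero_integralAt (p : Nat.Primes) : ((p : ℕ) : integralAt S) ≠ 0 := by
  simpa [Subtype.ext_iff] using p.2.ne_zero

theorem prime_natCast_integralAt {p : Nat.Primes} (hp : p ∈ S) :
    Prime ((p : ℕ) : integralAt S) := by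
  refine ⟨natCast_ne_zero_integralAt p, fun hu => ?_, fun a b hab => ?_⟩
  · have := (isUnit_integralAt_iff (natCast_ne_zero_integralAt p)).1 hu p hp
    simp [padicValRat.self p.2.one_lt] at this
  rcases eq_or_ne a 0 with rfl | ha
  · exact Or.inl (dvd_zero _)
  rcases eq_or_ne b 0 with rfl | hb
  · exact Or.inr (dvd_zero _)
  rw [natCast_dvd_integralAt_iff hp (mul_ne_zero ha hb), Subring.coe_mul,
    padicValRat.mul (by exact_mod_cast ha) (by exact_mod_cast hb)] at hab
  rw [natCast_dvd_integralAt_iff hp ha, natCast_dvd_integralAt_iff hp hb]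
  have := a.2 p hp
  have := b.2 p hp
  omega

theorem irreducible_integralAt_iff {a : integralAt S} :
    Irreducible a ↔ ∃ p ∈ S, Associated ((p : ℕ) : integralAt S) a := by
  constructor
  · intro h
    obtain ⟨p, hp, hv⟩ : ∃ p ∈ S, padicValRat p a ≠ 0 := by
      by_contra! hv
      exact h.not_isUnit ((isUnit_integralAt_iff h.ne_zero).2 hv)
    obtain ⟨b, rfl⟩ := (natCast_dvd_integralAt_iff hp h.ne_zero).2
      (by have := a.2 p hp; omega)
    rcases h.isUnit_or_isUnit rfl with hu | hu
    · exact absurd hu (prime_natCast_integralAt hp).not_isUnit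
    · exact ⟨p, hp, associated_mul_unit_right _ _ hu⟩
  · rintro ⟨p, hp, hpa⟩
    exact hpa.irreducible (prime_natCast_integralAt hp).irreducible

theorem natCast_associated_integralAt_iff {p q : Nat.Primes} (hp : p ∈ S) :
    Associated ((p : ℕ) : integralAt S) ((q : ℕ) : integralAt S) ↔ p = q := by
  refine ⟨fun h => ?_, by rintro rfl; rfl⟩
  have := (natCast_dvd_integralAt_iff hp (natCast_ne_zero_integralAt q)).1 h.dvd
  rw [Subring.coe_natCast, padicValRat_primes_eq_ite] at this
  by_contra hpq
  simp [hpq] at this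

theorem encard_setOf_irreducible_integralAt :
    {x : Associates (integralAt S) | Irreducible x}.encard = S.encard := by
  have : {x : Associates (integralAt S) | Irreducible x} =
      (fun p : Nat.Primes => Associates.mk ((p : ℕ) : integralAt S)) '' S := by
    ext x
    obtain ⟨a, rfl⟩ := Associates.mk_surjective x
    simp [Associates.irreducible_mk, irreducible_integralAt_iff,
      Associates.mk_eq_mk_iff_associated]
  rw [this, Set.InjOn.encard_image]
  intro p hp q _ hpq
  exact (natCast_associated_integralAt_iff hp).1 (Associates.mk_eq_mk_iff_associated.1 hpq)

theorem exists_ne_zero_not_isUnit_integralAt (hS : S.Nonempty) :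
    ∃ d : integralAt S, d ≠ 0 ∧ ¬IsUnit d :=
  ⟨_, natCast_ne_zero_integralAt hS.some, (prime_natCast_integralAt hS.some_mem).not_isUnit⟩

end Rat

namespace AlgHom

variable {K B : Type*} [Field K] [CommRing B] [Algebra K B] (ε : B →ₐ[K] K) (D : Subring K)

def comapSubring : Subring B := D.comap (ε : B →+* K)

def comapProj : ε.comapSubring D →+* D :=
  ((ε : B →+* K).comp (ε.comapSubring D).subtype).codRestrict D fun f => f.2

def comapIncl : D →+* ε.comapSubring D :=
  ((algebraMap K B).comp D.subtype).codRestrict (ε.comapSubring D) fun a => by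
    simp [comapSubring]

variable {ε D}

theorem mem_comapSubring {b : B} : b ∈ ε.comapSubring D ↔ ε b ∈ D := Iff.rfl

@[simp]
theorem coe_comapProj (f : ε.comapSubring D) : (ε.comapProj D f : K) = ε f := rfl

@[simp]
theorem coe_comapIncl (a : D) : (ε.comapIncl D a : B) = algebraMap K B a := rfl

@[simp]
theorem comapProj_comapIncl (a : D) : ε.comapProj D (ε.comapIncl D a) = a :=
  Subtype.ext (ε.commutes a)

instance : IsLocalHom (ε.comapIncl D) :=
  ⟨fun a ha => by simpa using ha.map (ε.comapProj D)⟩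

theorem isUnit_of_isUnit_coe {f : ε.comapSubring D} (hf : IsUnit (f : B))
    (hεf : IsUnit (ε.comapProj D f)) : IsUnit f := by
  obtain ⟨u, hu⟩ := hf
  have hmem : ((u⁻¹ : Bˣ) : B) ∈ ε.comapSubring D := by
    rw [mem_comapSubring, map_units_inv, hu, ← coe_comapProj]
    exact Submonoid.inv_mem_of_isUnit hεf
  exact IsUnit.of_mul_eq_one (b := ⟨_, hmem⟩) (Subtype.ext (by simp [← hu]))

theorem exists_eq_comapIncl_mul {d : D} (hd : d ≠ 0) {f : ε.comapSubring D}
    (h : (d : K)⁻¹ * ε f ∈ D) :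
    ∃ g : ε.comapSubring D, ε g = (d : K)⁻¹ * ε f ∧ f = ε.comapIncl D d * g := by
  have hd' : (d : K) ≠ 0 := by exact_mod_cast hd
  refine ⟨⟨algebraMap K B (d : K)⁻¹ * f, by simpa [mem_comapSubring] using h⟩, by simp,
    Subtype.ext ?_⟩
  simp [← mul_assoc, ← map_mul, mul_inv_cancel₀ hd']

theorem comapProj_ne_zero_of_irreducible (hD : ∃ d : D, d ≠ 0 ∧ ¬IsUnit d)
    {f : ε.comapSubring D} (hf : Irreducible f) : ε.comapProj D f ≠ 0 := by
  intro hf0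
  have hf0' : ε f = 0 := by simpa using congrArg Subtype.val hf0
  obtain ⟨d, hd0, hdu⟩ := hD
  obtain ⟨g, hg, hfg⟩ := exists_eq_comapIncl_mul hd0 (f := f) (by simp [hf0'])
  rcases hf.isUnit_or_isUnit hfg with hu | hu
  · exact hdu (by simpa using hu.map (ε.comapProj D))
  · exact (hu.map (ε.comapProj D)).ne_zero (Subtype.ext (by simp [hg, hf0']))

theorem isUnit_comapProj_or_associated (hD : ∃ d : D, d ≠ 0 ∧ ¬IsUnit d)
    {f : ε.comapSubring D} (hf : Irreducible f) :
    IsUnit (ε.comapProj D f) ∨ Associated (ε.comapIncl D (ε.comapProj D f)) f := by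
  have hf0 := comapProj_ne_zero_of_irreducible hD hf
  obtain ⟨g, -, hfg⟩ := exists_eq_comapIncl_mul hf0 (f := f)
    (by simp [inv_mul_cancel₀ (show ε f ≠ 0 by simpa [Subtype.ext_iff] using hf0), one_mem])
  rcases hf.isUnit_or_isUnit hfg with hu | hu
  · exact Or.inl (by simpa using hu.map (ε.comapProj D))
  · refine Or.inr ?_
    nth_rewrite 2 [hfg]
    exact associated_mul_unit_right _ _ hu

theorem not_forall_isAtomicElem_comapSubring (hD : ∃ d : D, d ≠ 0 ∧ ¬IsUnit d) {x : B}
    (hx0 : x ≠ 0) (hx : ε x = 0) : ¬ ∀ a : ε.comapSubring D, a ≠ 0 → IsAtomicElem a :=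
  fun h => not_isAtomicElem_of_map_eq_zero (ε.comapProj D)
    (fun _ hp => comapProj_ne_zero_of_irreducible hD hp)
    (x := ⟨x, by simp [mem_comapSubring, hx]⟩)
    (Subtype.ext hx) (h _ (by simpa [Subtype.ext_iff] using hx0))

theorem associated_of_associated_coe {f g : ε.comapSubring D} (hf : IsUnit (ε.comapProj D f))
    (hg : IsUnit (ε.comapProj D g)) (h : Associated (f : B) g) : Associated f g := by
  obtain ⟨u, hu⟩ := h
  have hf0 : ε f ≠ 0 := by simpa [Subtype.ext_iff] using hf.ne_zero
  have hεu : ε u = ε g * (ε f)⁻¹ := by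
    rw [← hu, map_mul, mul_comm (ε f), mul_assoc, mul_inv_cancel₀ hf0, mul_one]
  have hmem : (u : B) ∈ ε.comapSubring D := by
    rw [mem_comapSubring, hεu, ← coe_comapProj, ← coe_comapProj]
    exact mul_mem (SetLike.coe_mem _) (Submonoid.inv_mem_of_isUnit hf)
  have hr : IsUnit (⟨u, hmem⟩ : ε.comapSubring D) := by
    refine isUnit_of_isUnit_coe u.isUnit ?_
    have hinv : (((hf.unit⁻¹ : Dˣ) : D) : K) = (ε f)⁻¹ := by
      rw [← coe_comapProj]
      conv_rhs => rw [← hf.unit_spec]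
      exact map_units_inv D.subtype hf.unit
    have : ε.comapProj D ⟨u, hmem⟩ = ε.comapProj D g * hf.unit⁻¹ :=
      Subtype.ext (by simp [hεu, hinv])
    exact this ▸ hg.mul (hf.unit⁻¹).isUnit
  exact ⟨hr.unit, Subtype.ext hu⟩

theorem isIDFDomain_comapSubring [IsDomain B] [UniqueFactorizationMonoid B]
    (hD : ∃ d : D, d ≠ 0 ∧ ¬IsUnit d) (hfin : {q : Associates D | Irreducible q}.Finite) :
    IsIDFDomain (ε.comapSubring D) := by
  intro f hf
  have hf' : (f : B) ≠ 0 := fun h => hf (Subtype.ext h)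
  have hE :
      (Associates.mk '' {g : ε.comapSubring D | IsUnit (ε.comapProj D g) ∧ g ∣ f}).Finite := by
    refine Set.Finite.of_finite_image (f := Associates.map (ε.comapSubring D).subtype)
      ((Associates.finite_setOf_dvd_mk hf').subset ?_) ?_
    · rintro _ ⟨_, ⟨g, ⟨-, hgf⟩, rfl⟩, rfl⟩
      exact Associates.mk_dvd_mk.2 (map_dvd (ε.comapSubring D).subtype hgf)
    · rintro _ ⟨g, ⟨hg, -⟩, rfl⟩ _ ⟨h, ⟨hh, -⟩, rfl⟩ hgh
      exact Associates.mk_eq_mk_iff_associated.2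
        (associated_of_associated_coe hg hh (Associates.mk_eq_mk_iff_associated.1 hgh))
  refine ((hfin.image (Associates.map (ε.comapIncl D))).union hE).subset ?_
  rintro p ⟨hp, hpf⟩
  obtain ⟨g, rfl⟩ := Associates.mk_surjective p
  rw [Associates.irreducible_mk] at hp
  rcases isUnit_comapProj_or_associated hD hp with hu | hg
  · exact Or.inr ⟨g, ⟨hu, Associates.mk_dvd_mk.1 hpf⟩, rfl⟩
  · exact Or.inl ⟨_, Associates.irreducible_mk.2 (hg.symm.irreducible hp).of_map,
      Associates.mk_eq_mk_iff_associated.2 hg⟩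

theorem encard_setOf_irreducible_comapSubring [IsLocalHom ε]
    (hD : ∃ d : D, d ≠ 0 ∧ ¬IsUnit d) :
    {p : Associates (ε.comapSubring D) | Irreducible p}.encard =
      {q : Associates D | Irreducible q}.encard := by
  have hlocal : ∀ f : ε.comapSubring D, IsUnit (ε.comapProj D f) → IsUnit f := fun f hf =>
    isUnit_of_isUnit_coe (isUnit_of_map_unit ε _ (by simpa using hf.map D.subtype)) hf
  exact Associates.encard_setOf_irreducible_eq_of_retraction (ε.comapIncl D : D →* _)
    (ε.comapProj D : _ →* D) hlocal comapProj_comapIncl fun f hf =>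
      (isUnit_comapProj_or_associated hD hf).resolve_left fun hu => hf.not_isUnit (hlocal f hu)

end AlgHom

namespace Polynomial

variable {K : Type*} [Field K] {D : Subring K}

instance {R : Type*} [Semiring R] [Countable R] : Countable R[X] :=
  (AddMonoidAlgebra.coeff_injective.comp toFinsupp_injective).countable

theorem isUnit_of_natDegree_eq_zero {g : (aeval (0 : K)).comapSubring D}
    (hg : (g : K[X]).natDegree = 0) (hu : IsUnit ((aeval 0).comapProj D g)) : IsUnit g := by
  have : g = (aeval 0).comapIncl D ((aeval 0).comapProj D g) := by
    refine Subtype.ext ?_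
    rw [AlgHom.coe_comapIncl, AlgHom.coe_comapProj, ← coeff_zero_eq_aeval_zero, algebraMap_eq]
    exact eq_C_of_natDegree_eq_zero hg
  exact this ▸ hu.map _

theorem irreducible_of_natDegree_eq_one {f : (aeval (0 : K)).comapSubring D}
    (hf : (f : K[X]).natDegree = 1) (hu : IsUnit ((aeval 0).comapProj D f)) : Irreducible f := by
  refine ⟨fun h => ?_, fun g h hgh => ?_⟩
  · have := natDegree_eq_zero_of_isUnit (h.map ((aeval (0 : K)).comapSubring D).subtype)
    simp [hf] at this
  have hgh' : (f : K[X]) = g * h := congrArg Subtype.val hgh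
  have hf0 : (f : K[X]) ≠ 0 := by rintro h0; simp [h0] at hf
  rw [hgh'] at hf hf0
  rw [natDegree_mul (left_ne_zero_of_mul hf0) (right_ne_zero_of_mul hf0)] at hf
  rw [hgh, map_mul, IsUnit.mul_iff] at hu
  rcases Nat.add_eq_one_iff.1 hf with ⟨hg, -⟩ | ⟨-, hh⟩
  · exact Or.inl (isUnit_of_natDegree_eq_zero hg hu.1)
  · exact Or.inr (isUnit_of_natDegree_eq_zero hh hu.2)

theorem encard_setOf_irreducible_comapSubring_eq_top [Infinite K] :
    {p : Associates ((aeval (0 : K)).comapSubring D) | Irreducible p}.encard = ⊤ := by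
  let linear (a : K) : (aeval (0 : K)).comapSubring D :=
    ⟨C a * X + C 1, by simp [AlgHom.mem_comapSubring, one_mem]⟩
  refine Set.encard_eq_top_iff.2 <| Set.infinite_of_injOn_mapsTo (s := {0}ᶜ)
    (f := fun a => Associates.mk (linear a)) (fun a _ b _ hab => ?_) (fun a ha => ?_)
    (Set.finite_singleton 0).infinite_compl
  · obtain ⟨u, hu⟩ := Associates.mk_eq_mk_iff_associated.1 hab
    obtain ⟨c, -, hc⟩ := isUnit_iff.1 (u.isUnit.map ((aeval (0 : K)).comapSubring D).subtype)
    have hu' : (C a * X + C 1) * C c = C b * X + C 1 := by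
      have := congrArg Subtype.val hu
      rw [Subring.coe_mul] at this
      exact hc ▸ this
    have h0 := congrArg (coeff · 0) hu'
    have h1 := congrArg (coeff · 1) hu'
    simp only [coeff_mul_C, coeff_add, coeff_C_mul_X, coeff_C] at h0 h1
    simp at h0
    simpa [h0] using h1
  · refine Associates.irreducible_mk.2 (irreducible_of_natDegree_eq_one (natDegree_linear ha) ?_)
    exact (show (aeval 0).comapProj D (linear a) = 1 from Subtype.ext (by simp [linear])) ▸
      isUnit_one

end Polynomial

namespace PowerSeries

def constantCoeffAlgHom (R : Type*) [CommRing R] : R⟦X⟧ →ₐ[R] R :=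
  { constantCoeff with commutes' := constantCoeff_C }

instance {R : Type*} [CommRing R] : IsLocalHom (constantCoeffAlgHom R) :=
  ⟨fun _ hf => isUnit_iff_constantCoeff.2 hf⟩

end PowerSeries

/-- For every `ℓ ∈ ℕ≥1 ∪ {∞}` there exists an integral domain that is an IDF
domain, is not atomic, and has exactly `ℓ` irreducible elements up to associates (the set of
associate classes of irreducibles has extended cardinality `ℓ`, and it is countable, so that
in the case `ℓ = ∞` it is countably infinite). -/
theorem exists_nonatomic_idf_domain_with_prescribed_atoms :
    ∀ ℓ : ℕ∞, 1 ≤ ℓ →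
      ∃ (R : Type) (_ : CommRing R) (_ : IsDomain R),
        IsIDFDomain R ∧
        ¬ (∀ a : R, a ≠ 0 → IsAtomicElem a) ∧
        {p : Associates R | Irreducible p}.encard = ℓ ∧
        {p : Associates R | Irreducible p}.Countable := by
  intro ℓ hℓ
  induction ℓ using ENat.recTopCoe with
  | top =>
    let S : Set Nat.Primes := {⟨2, Nat.prime_two⟩}
    have hD := Rat.exists_ne_zero_not_isUnit_integralAt (Set.singleton_nonempty _ : S.Nonempty)
    have hfin : {q : Associates (Rat.integralAt S) | Irreducible q}.Finite :=
      Set.finite_of_encard_eq_coe (k := 1)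
        (Rat.encard_setOf_irreducible_integralAt.trans (Set.encard_singleton _))
    exact ⟨(Polynomial.aeval (0 : ℚ)).comapSubring (Rat.integralAt S), inferInstance,
      inferInstance, AlgHom.isIDFDomain_comapSubring hD hfin,
      AlgHom.not_forall_isAtomicElem_comapSubring hD Polynomial.X_ne_zero (by simp),
      Polynomial.encard_setOf_irreducible_comapSubring_eq_top, Set.to_countable _⟩
  | coe n =>
    obtain ⟨S, hS⟩ := Infinite.exists_subset_card_eq Nat.Primes n
    have hS0 : (S : Set Nat.Primes).Nonempty := by
      rw [Finset.coe_nonempty, ← Finset.card_pos, hS]; exact_mod_cast hℓ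
    have hD := Rat.exists_ne_zero_not_isUnit_integralAt hS0
    have hirr : {p : Associates ((PowerSeries.constantCoeffAlgHom ℚ).comapSubring
        (Rat.integralAt S)) | Irreducible p}.encard = n := by
      rw [AlgHom.encard_setOf_irreducible_comapSubring hD, Rat.encard_setOf_irreducible_integralAt,
        Set.encard_coe_eq_coe_finsetCard, hS]
    exact ⟨_, inferInstance, inferInstance,
      isIDFDomain_of_finite_setOf_irreducible (Set.finite_of_encard_eq_coe hirr),
      AlgHom.not_forall_isAtomicElem_comapSubring hD PowerSeries.X_ne_zero
        PowerSeries.constantCoeff_X, hirr, (Set.finite_of_encard_eq_coe hirr).countable⟩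
end

section
/- The subring R = ℝ + Xℂ[X] of the polynomial ring ℂ[X], consisting of all polynomials with complex coefficients whose constant term is real, is not an MCD-finite domain: there exists a nonempty finite subset of nonzero elements of R having infinitely many pairwise non-associate maximal common divisors. -/
/-- The subring `ℝ + Xℂ[X]` of `ℂ[X]`: all polynomials with complex coefficients whose
constant term is real. -/
noncomputable def realConstSubring : Subring (Polynomial ℂ) where
  carrier := {f : Polynomial ℂ | ∃ r : ℝ, f.coeff 0 = (r : ℂ)}
  zero_mem' := ⟨0, by simp⟩
  one_mem' := ⟨1, by simp⟩
  add_mem' := by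
    rintro a b ⟨r, hr⟩ ⟨s, hs⟩
    exact ⟨r + s, by simp [hr, hs]⟩
  mul_mem' := by
    rintro a b ⟨r, hr⟩ ⟨s, hs⟩
    exact ⟨r * s, by simp [Polynomial.mul_coeff_zero, hr, hs]⟩
  neg_mem' := by
    rintro a ⟨r, hr⟩
    exact ⟨-r, by simp [hr]⟩


open Polynomial Complex

namespace realConstSubring

noncomputable def cX (c : ℂ) : realConstSubring :=
  ⟨C c * X, 0, by simp⟩

noncomputable def cXSq (c : ℂ) : realConstSubring :=
  ⟨C c * X ^ 2, 0, by simp⟩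

@[simp]
lemma coe_cX (c : ℂ) : (cX c : ℂ[X]) = C c * X := rfl

@[simp]
lemma coe_cXSq (c : ℂ) : (cXSq c : ℂ[X]) = C c * X ^ 2 := rfl

lemma cX_ne_zero {c : ℂ} (hc : c ≠ 0) : cX c ≠ 0 := by
  simp [← Subtype.coe_ne_coe, hc, X_ne_zero]

lemma cXSq_ne_zero {c : ℂ} (hc : c ≠ 0) : cXSq c ≠ 0 := by
  simp [← Subtype.coe_ne_coe, hc, X_ne_zero]

lemma cX_mul_cX (a b : ℂ) : cX a * cX b = cXSq (a * b) := by
  ext1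
  simp only [Subring.coe_mul, coe_cX, coe_cXSq, C_mul]
  ring

lemma isUnit_iff {e : realConstSubring} :
    IsUnit e ↔ ∃ r : ℝ, r ≠ 0 ∧ (e : ℂ[X]) = C (r : ℂ) := by
  constructor
  · intro he
    obtain ⟨b, hb, hbe⟩ := Polynomial.isUnit_iff.mp (he.map realConstSubring.subtype)
    replace hbe : C b = (e : ℂ[X]) := hbe
    obtain ⟨r, hr⟩ := e.2
    obtain rfl : b = r := by rw [← hr, ← hbe, coeff_C_zero]
    exact ⟨r, by simpa using hb.ne_zero, hbe.symm⟩
  · rintro ⟨r, hr, he⟩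
    refine .of_mul_eq_one ⟨C ((r⁻¹ : ℝ) : ℂ), r⁻¹, by simp⟩ (Subtype.ext ?_)
    simp [he, ← C_mul, hr]

lemma isUnit_of_natDegree_eq_zero {e : realConstSubring} (he : e ≠ 0)
    (hdeg : (e : ℂ[X]).natDegree = 0) : IsUnit e := by
  obtain ⟨r, hr⟩ := e.2
  have heC : (e : ℂ[X]) = C (r : ℂ) := by rw [eq_C_of_natDegree_eq_zero hdeg, hr]
  refine isUnit_iff.mpr ⟨r, fun hr0 ↦ he (Subtype.ext ?_), heC⟩
  simp [heC, hr0]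

lemma exists_real_of_associated {f g : realConstSubring} (h : Associated f g) :
    ∃ r : ℝ, (g : ℂ[X]) = f * C (r : ℂ) := by
  obtain ⟨u, rfl⟩ := h
  obtain ⟨r, -, hu⟩ := isUnit_iff.mp u.isUnit
  exact ⟨r, by simp [hu]⟩

lemma exists_real_of_associated_cX {a b : ℂ} (h : Associated (cX a) (cX b)) :
    ∃ r : ℝ, b = a * r := by
  obtain ⟨r, hr⟩ := exists_real_of_associated h
  refine ⟨r, ?_⟩
  simpa using congrArg (coeff · 1) hr

lemma isUnit_or_associated_of_mul_eq_cX {a : ℂ} (ha : a ≠ 0) {f g : realConstSubring}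
    (h : f * g = cX a) : IsUnit f ∨ Associated f (cX a) := by
  have hf : f ≠ 0 := left_ne_zero_of_mul (h ▸ cX_ne_zero ha)
  have hg : g ≠ 0 := right_ne_zero_of_mul (h ▸ cX_ne_zero ha)
  have hdeg : (f : ℂ[X]).natDegree + (g : ℂ[X]).natDegree = 1 := by
    rw [← natDegree_mul (by simpa using hf) (by simpa using hg), ← Subring.coe_mul, h,
      coe_cX, natDegree_C_mul_X a ha]
  rcases Nat.eq_zero_or_pos (f : ℂ[X]).natDegree with hf0 | hf1
  · exact .inl (isUnit_of_natDegree_eq_zero hf hf0)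
  · exact .inr (h ▸ associated_mul_unit_right f g (isUnit_of_natDegree_eq_zero hg (by omega)))

lemma cX_dvd_cXSq {c : ℂ} (hc : c ≠ 0) (a : ℂ) : cX c ∣ cXSq a :=
  ⟨cX (a / c), by rw [cX_mul_cX, mul_div_cancel₀ a hc]⟩

lemma eq_cX_of_cX_mul_eq_cXSq {a c : ℂ} (hc : c ≠ 0) {f : realConstSubring}
    (h : cX c * f = cXSq a) : f = cX (a / c) :=
  mul_left_cancel₀ (cX_ne_zero hc) (by rw [h, cX_mul_cX, mul_div_cancel₀ a hc])

theorem isMCD_cX {c : ℂ} (hc : c ≠ 0) : IsMCD {cXSq 1, cXSq I} (cX c) := by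
  refine ⟨?_, fun e he ↦ ?_⟩
  · rintro s (rfl | rfl) <;> exact cX_dvd_cXSq hc _
  obtain ⟨q, hq⟩ := he _ (.inl rfl)
  obtain ⟨q', hq'⟩ := he _ (.inr rfl)
  rw [mul_assoc, eq_comm] at hq hq'
  have h1 := isUnit_or_associated_of_mul_eq_cX (div_ne_zero one_ne_zero hc)
    (eq_cX_of_cX_mul_eq_cXSq hc hq)
  have h2 := isUnit_or_associated_of_mul_eq_cX (div_ne_zero I_ne_zero hc)
    (eq_cX_of_cX_mul_eq_cXSq hc hq')
  by_contra hu
  obtain ⟨r, hr⟩ :=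
    exists_real_of_associated_cX ((h1.resolve_left hu).symm.trans (h2.resolve_left hu))
  have hI : I = r := by
    field_simp at hr
    exact hr
  simpa using congrArg im hI

lemma injective_associatesMk_cX :
    Function.Injective fun t : ℝ ↦ Associates.mk (cX (1 + t * I)) := by
  intro s t h
  obtain ⟨r, hr⟩ := exists_real_of_associated_cX (Associates.mk_eq_mk_iff_associated.mp h)
  have hre : 1 = r := by simpa using congrArg re hr
  have him : t = s * r := by simpa using congrArg im hr
  rw [him, ← hre, mul_one]

theorem infinite_associates_isMCD :
    (Associates.mk '' {d | IsMCD {cXSq 1, cXSq I} d}).Infinite :=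
  Set.infinite_of_injective_forall_mem injective_associatesMk_cX fun t ↦
    ⟨_, isMCD_cX fun h ↦ by simpa using congrArg re h, rfl⟩

end realConstSubring

/-- `R = ℝ + Xℂ[X]` is not an MCD-finite domain: there is a nonempty finite
set of nonzero elements of `R` having infinitely many pairwise non-associate maximal common
divisors. -/
theorem realConstSubring_not_mcd_finite :
    ¬ IsMCDFiniteDomain realConstSubring ∧
    ∃ S : Finset realConstSubring, S.Nonempty ∧ (∀ s ∈ S, s ≠ 0) ∧
      (Associates.mk '' {d : realConstSubring | IsMCD (↑S : Set realConstSubring) d}).Infinite := by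
  have hS : ∃ S : Finset realConstSubring, S.Nonempty ∧ (∀ s ∈ S, s ≠ 0) ∧
      (Associates.mk '' {d : realConstSubring | IsMCD (↑S : Set realConstSubring) d}).Infinite := by
    refine ⟨{realConstSubring.cXSq 1, realConstSubring.cXSq I}, Finset.insert_nonempty _ _,
      by simp [realConstSubring.cXSq_ne_zero, I_ne_zero], ?_⟩
    rw [Finset.coe_pair]
    exact realConstSubring.infinite_associates_isMCD
  obtain ⟨S, hne, h0, hinf⟩ := hS
  exact ⟨fun hfin ↦ hinf (hfin S hne h0), S, hne, h0, hinf⟩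
end

section
/- Let (p_n)_{n≥1} be a strictly increasing sequence of odd primes and let G be the additive submonoid of ℚ≥0 generated by {1/(2^n p_n) : n ∈ ℕ} (Grams' monoid). Then the set of atoms of G is exactly {1/(2^n p_n) : n ∈ ℕ}, and the element 1 ∈ G has factorizations of arbitrarily large length and is divisible in G by infinitely many pairwise distinct atoms; consequently G is neither a BFM nor an IDF monoid. -/
/-- In an additive submonoid `M` of `ℚ` (a reduced monoid), an atom is a nonzero element of
`M` that is not the sum of two nonzero elements of `M`. -/
def IsAtomIn (M : AddSubmonoid ℚ) (a : ℚ) : Prop :=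
  a ∈ M ∧ a ≠ 0 ∧ ∀ b c : ℚ, b ∈ M → c ∈ M → a = b + c → b = 0 ∨ c = 0

/-- `a` divides `b` in the additive submonoid `M` of `ℚ` if `b = a + c` for some `c ∈ M`. -/
def DividesIn (M : AddSubmonoid ℚ) (a b : ℚ) : Prop :=
  ∃ c ∈ M, b = a + c

/-- The factorizations of `q` in an additive submonoid `M` of `ℚ`: multisets of atoms of
`M` whose sum is `q`. -/
def FactorizationsIn (M : AddSubmonoid ℚ) (q : ℚ) : Set (Multiset ℚ) :=
  {s | (∀ x ∈ s, IsAtomIn M x) ∧ s.sum = q}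

/-- An additive submonoid `M` of `ℚ` is a BFM if every element of `M` has a nonempty finite
set of factorization lengths. -/
def IsBFMIn (M : AddSubmonoid ℚ) : Prop :=
  ∀ q ∈ M, (Multiset.card '' FactorizationsIn M q).Nonempty ∧
    (Multiset.card '' FactorizationsIn M q).Finite

/-- An additive submonoid `M` of `ℚ` is an IDF monoid if every element of `M` is divisible
in `M` by only finitely many atoms (the monoid being reduced, associates coincide). -/
def IsIDFIn (M : AddSubmonoid ℚ) : Prop :=
  ∀ q ∈ M, {a : ℚ | IsAtomIn M a ∧ DividesIn M a q}.Finite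

/-!
The `p_n`-adic norm separates the generator `1/(2^n p_n)` from all the others: it is `p_n > 1`
there and `1` on every other generator, as the `p_k` are distinct odd primes. Being
non-archimedean, it is then at most `1` on the submonoid generated by the other generators, so
`1/(2^n p_n)` is not a sum of them, and it is an atom. Since `1 = (2^n p_n) • 1/(2^n p_n)` for
every `n`, the element `1` has factorizations of unbounded length and infinitely many atom
divisors.
-/

theorem AddSubmonoid.eq_zero_or_exists_add_of_mem_closure {A : Type*} [AddMonoid A] {S : Set A}
    {x : A} (hx : x ∈ AddSubmonoid.closure S) :
    x = 0 ∨ ∃ s ∈ S, ∃ y ∈ AddSubmonoid.closure S, x = s + y := by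
  induction hx using AddSubmonoid.closure_induction with
  | mem s hs => exact .inr ⟨s, hs, 0, zero_mem _, (add_zero s).symm⟩
  | zero => exact .inl rfl
  | add x y _ hy ihx ihy =>
    rcases ihx with rfl | ⟨s, hs, z, hz, rfl⟩
    · rwa [zero_add]
    · exact .inr ⟨s, hs, z + y, add_mem hz hy, add_assoc s z y⟩

theorem AddSubmonoid.mem_closure_insert {A : Type*} [AddCommMonoid A] {a x : A} {T : Set A} :
    x ∈ AddSubmonoid.closure (insert a T) ↔
      ∃ k : ℕ, ∃ y ∈ AddSubmonoid.closure T, k • a + y = x := by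
  rw [Set.insert_eq, AddSubmonoid.closure_union, AddSubmonoid.mem_sup]
  simp_rw [AddSubmonoid.mem_closure_singleton, exists_exists_eq_and]

theorem nonneg_of_mem_closure {A : Type*} [AddCommMonoid A] [PartialOrder A]
    [IsOrderedAddMonoid A] {T : Set A} (hT : ∀ x ∈ T, 0 ≤ x) {x : A}
    (hx : x ∈ AddSubmonoid.closure T) : 0 ≤ x :=
  AddSubmonoid.closure_induction hT le_rfl (fun _ _ _ _ => add_nonneg) hx

theorem padicNorm_le_one_of_mem_closure {q : ℕ} [Fact q.Prime] {T : Set ℚ}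
    (hT : ∀ x ∈ T, padicNorm q x ≤ 1) {x : ℚ} (hx : x ∈ AddSubmonoid.closure T) :
    padicNorm q x ≤ 1 :=
  AddSubmonoid.closure_induction hT (by simp)
    (fun _ _ _ _ hx hy => padicNorm.nonarchimedean.trans (max_le hx hy)) hx

theorem mem_of_isAtomIn_closure {S : Set ℚ} (h0 : (0 : ℚ) ∉ S) {a : ℚ}
    (ha : IsAtomIn (AddSubmonoid.closure S) a) : a ∈ S := by
  obtain ⟨haS, ha0, hirr⟩ := ha
  obtain rfl | ⟨s, hs, y, hy, rfl⟩ := AddSubmonoid.eq_zero_or_exists_add_of_mem_closure haS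
  · exact absurd rfl ha0
  rcases hirr s y (AddSubmonoid.subset_closure hs) hy rfl with rfl | rfl
  · exact absurd hs h0
  · rwa [add_zero]

theorem isAtomIn_closure_insert {a : ℚ} {T : Set ℚ} (ha : 0 < a) (hT : ∀ x ∈ T, 0 ≤ x)
    (haT : a ∉ AddSubmonoid.closure T) : IsAtomIn (AddSubmonoid.closure (insert a T)) a := by
  refine ⟨AddSubmonoid.subset_closure (Set.mem_insert a T), ha.ne', ?_⟩
  intro b c hb hc habc
  obtain ⟨i, y, hy, rfl⟩ := AddSubmonoid.mem_closure_insert.1 hb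
  obtain ⟨j, z, hz, rfl⟩ := AddSubmonoid.mem_closure_insert.1 hc
  have hy0 := nonneg_of_mem_closure hT hy
  have hz0 := nonneg_of_mem_closure hT hz
  simp only [nsmul_eq_mul] at habc ⊢
  rcases Nat.eq_zero_or_pos (i + j) with hij | hij
  · obtain ⟨rfl, rfl⟩ : i = 0 ∧ j = 0 := by omega
    refine absurd ?_ haT
    rw [habc]
    simpa using add_mem hy hz
  · -- `a = (i + j) a + (y + z)` with `a > 0` and `y, z ≥ 0` leaves no room beyond `i + j = 1`.
    have hij' : (1 : ℚ) ≤ i + j := by exact_mod_cast hij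
    obtain ⟨rfl, rfl⟩ : y = 0 ∧ z = 0 := by constructor <;> nlinarith
    have hij1 : i + j = 1 := by
      exact_mod_cast (show ((i + j : ℕ) : ℚ) = 1 by push_cast; nlinarith)
    obtain rfl | rfl : i = 0 ∨ j = 0 := by omega
    all_goals simp

theorem replicate_mem_factorizationsIn {M : AddSubmonoid ℚ} {a : ℚ} (ha : IsAtomIn M a)
    (N : ℕ) : Multiset.replicate N a ∈ FactorizationsIn M (N • a) :=
  ⟨fun _ hx => Multiset.eq_of_mem_replicate hx ▸ ha, Multiset.sum_replicate N a⟩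

theorem dividesIn_nsmul {M : AddSubmonoid ℚ} {a : ℚ} (ha : a ∈ M) {N : ℕ} (hN : N ≠ 0) :
    DividesIn M a (N • a) := by
  obtain ⟨k, rfl⟩ := Nat.exists_eq_succ_of_ne_zero hN
  exact ⟨k • a, nsmul_mem ha k, succ_nsmul' a k⟩

theorem not_isBFMIn_of_forall_exists_le_card {M : AddSubmonoid ℚ} {q : ℚ} (hq : q ∈ M)
    (h : ∀ N : ℕ, ∃ s ∈ FactorizationsIn M q, N ≤ Multiset.card s) : ¬ IsBFMIn M := by
  intro hM
  obtain ⟨B, hB⟩ := (hM q hq).2.bddAbove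
  obtain ⟨s, hs, hcard⟩ := h (B + 1)
  have := hB ⟨s, hs, rfl⟩
  omega

theorem padicNorm_one_div_two_pow_mul_self {q : ℕ} (hq : q.Prime) (hq2 : q ≠ 2) (k : ℕ) :
    padicNorm q (1 / (2 ^ k * q)) = q := by
  have := Fact.mk hq
  have h2 : padicNorm q ((2 ^ k : ℕ) : ℚ) = 1 :=
    (padicNorm.nat_eq_one_iff _).2 fun h =>
      hq2 ((Nat.prime_dvd_prime_iff_eq hq Nat.prime_two).1 (hq.dvd_of_dvd_pow h))
  push_cast at h2
  rw [padicNorm.div, padicNorm.mul, padicNorm.one, h2, padicNorm.padicNorm_p_of_prime]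
  simp

theorem padicNorm_one_div_two_pow_mul_of_ne {q r : ℕ} (hq : q.Prime) (hr : r.Prime)
    (hq2 : q ≠ 2) (hqr : q ≠ r) (k : ℕ) : padicNorm q (1 / (2 ^ k * r)) = 1 := by
  have := Fact.mk hq
  have h : padicNorm q ((2 ^ k * r : ℕ) : ℚ) = 1 := by
    refine (padicNorm.nat_eq_one_iff _).2 fun h => ?_
    rcases hq.dvd_mul.1 h with h | h
    · exact hq2 ((Nat.prime_dvd_prime_iff_eq hq Nat.prime_two).1 (hq.dvd_of_dvd_pow h))
    · exact hqr ((Nat.prime_dvd_prime_iff_eq hq hr).1 h)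
  push_cast at h
  rw [padicNorm.div, padicNorm.one, h, div_one]

namespace GramsMonoid

def gen (p : ℕ → ℕ) (n : ℕ) : ℚ := 1 / (2 ^ n * (p n : ℚ))

def generators (p : ℕ → ℕ) : Set ℚ := {q | ∃ n : ℕ, 1 ≤ n ∧ q = gen p n}

variable {p : ℕ → ℕ}

theorem gen_pos {n : ℕ} (hp : p n ≠ 0) : 0 < gen p n := by
  have : (0 : ℚ) < p n := by exact_mod_cast Nat.pos_of_ne_zero hp
  unfold gen
  positivity

theorem nsmul_gen {n : ℕ} (hp : p n ≠ 0) : (2 ^ n * p n) • gen p n = 1 := by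
  rw [gen, nsmul_eq_mul]
  push_cast
  exact mul_one_div_cancel (by positivity)

theorem gen_mem_closure {n : ℕ} (hn : 1 ≤ n) : gen p n ∈ AddSubmonoid.closure (generators p) :=
  AddSubmonoid.subset_closure ⟨n, hn, rfl⟩

theorem dividesIn_gen_one {n : ℕ} (hn : 1 ≤ n) (hp : p n ≠ 0) :
    DividesIn (AddSubmonoid.closure (generators p)) (gen p n) 1 :=
  nsmul_gen hp ▸ dividesIn_nsmul (gen_mem_closure hn) (by positivity)

section

variable (hprime : ∀ n : ℕ, 1 ≤ n → (p n).Prime) (hodd : ∀ n : ℕ, 1 ≤ n → p n ≠ 2)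
  (hinj : Set.InjOn p (Set.Ici 1))
include hprime hodd hinj

theorem gen_notMem_closure_generators_diff {n : ℕ} (hn : 1 ≤ n) :
    gen p n ∉ AddSubmonoid.closure (generators p \ {gen p n}) := by
  have := Fact.mk (hprime n hn)
  intro h
  have hle : padicNorm (p n) (gen p n) ≤ 1 := by
    refine padicNorm_le_one_of_mem_closure ?_ h
    rintro _ ⟨⟨k, hk, rfl⟩, hkn⟩
    have hne : n ≠ k := by rintro rfl; exact hkn rfl
    exact (padicNorm_one_div_two_pow_mul_of_ne (hprime n hn) (hprime k hk) (hodd n hn)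
      (hinj.ne hn hk hne) k).le
  rw [gen, padicNorm_one_div_two_pow_mul_self (hprime n hn) (hodd n hn)] at hle
  exact absurd hle (by exact_mod_cast (hprime n hn).one_lt.not_ge)

theorem isAtomIn_gen {n : ℕ} (hn : 1 ≤ n) :
    IsAtomIn (AddSubmonoid.closure (generators p)) (gen p n) := by
  have hmem : gen p n ∈ generators p := ⟨n, hn, rfl⟩
  rw [← Set.insert_eq_of_mem hmem, ← Set.insert_sdiff_singleton]
  refine isAtomIn_closure_insert (gen_pos (hprime n hn).ne_zero) ?_
    (gen_notMem_closure_generators_diff hprime hodd hinj hn)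
  rintro _ ⟨⟨k, hk, rfl⟩, -⟩
  exact (gen_pos (hprime k hk).ne_zero).le

theorem isAtomIn_closure_generators_iff {q : ℚ} :
    IsAtomIn (AddSubmonoid.closure (generators p)) q ↔ q ∈ generators p := by
  refine ⟨mem_of_isAtomIn_closure ?_, ?_⟩
  · rintro ⟨n, hn, h⟩
    exact (gen_pos (hprime n hn).ne_zero).ne h
  · rintro ⟨n, hn, rfl⟩
    exact isAtomIn_gen hprime hodd hinj hn

theorem injOn_gen : Set.InjOn (gen p) (Set.Ici 1) := by
  intro m hm n hn h
  by_contra hne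
  have hnorm := padicNorm_one_div_two_pow_mul_self (hprime m hm) (hodd m hm) m
  rw [← gen, h, gen, padicNorm_one_div_two_pow_mul_of_ne (hprime m hm) (hprime n hn) (hodd m hm)
    (hinj.ne hm hn hne)] at hnorm
  exact absurd hnorm (by exact_mod_cast (hprime m hm).one_lt.ne)

theorem exists_mem_factorizationsIn_one_le_card (N : ℕ) :
    ∃ s ∈ FactorizationsIn (AddSubmonoid.closure (generators p)) 1, N ≤ Multiset.card s := by
  have hp := (hprime (N + 1) N.succ_pos).ne_zero
  refine ⟨Multiset.replicate (2 ^ (N + 1) * p (N + 1)) (gen p (N + 1)),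
    nsmul_gen hp ▸ replicate_mem_factorizationsIn (isAtomIn_gen hprime hodd hinj N.succ_pos) _, ?_⟩
  rw [Multiset.card_replicate]
  calc N ≤ 2 ^ (N + 1) := N.le_succ.trans Nat.lt_two_pow_self.le
    _ ≤ 2 ^ (N + 1) * p (N + 1) := Nat.le_mul_of_pos_right _ (Nat.pos_of_ne_zero hp)

end

end GramsMonoid

open GramsMonoid in
/-- Let `(p_n)_{n ≥ 1}` be a strictly increasing sequence of odd primes and
let `G` be the additive submonoid of `ℚ≥0` generated by `{1/(2^n p_n) : n ≥ 1}` (Grams'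
monoid). Then the atoms of `G` are exactly the generators `1/(2^n p_n)`, the element
`1 ∈ G` has factorizations of arbitrarily large length and is divisible in `G` by
infinitely many distinct atoms; consequently `G` is neither a BFM nor an IDF monoid. -/
theorem grams_monoid_not_bfm_not_idf (p : ℕ → ℕ)
    (hprime : ∀ n : ℕ, 1 ≤ n → (p n).Prime)
    (hodd : ∀ n : ℕ, 1 ≤ n → p n ≠ 2)
    (hmono : ∀ m n : ℕ, 1 ≤ m → m < n → p m < p n)
    (G : AddSubmonoid ℚ)
    (hG : G = AddSubmonoid.closure {q : ℚ | ∃ n : ℕ, 1 ≤ n ∧ q = 1 / (2 ^ n * (p n : ℚ))}) :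
    (∀ q : ℚ, IsAtomIn G q ↔ ∃ n : ℕ, 1 ≤ n ∧ q = 1 / (2 ^ n * (p n : ℚ))) ∧
    (1 : ℚ) ∈ G ∧
    (∀ N : ℕ, ∃ s ∈ FactorizationsIn G 1, N ≤ Multiset.card s) ∧
    {a : ℚ | IsAtomIn G a ∧ DividesIn G a 1}.Infinite ∧
    ¬ IsBFMIn G ∧ ¬ IsIDFIn G := by
  change G = AddSubmonoid.closure (generators p) at hG
  subst hG
  have hinj : Set.InjOn p (Set.Ici 1) := StrictMonoOn.injOn fun m hm n _ h => hmono m n hm h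
  have hone : (1 : ℚ) ∈ AddSubmonoid.closure (generators p) :=
    nsmul_gen (hprime 1 le_rfl).ne_zero ▸ nsmul_mem (gen_mem_closure le_rfl) _
  have hlong := exists_mem_factorizationsIn_one_le_card hprime hodd hinj
  have hinf : {a | IsAtomIn (AddSubmonoid.closure (generators p)) a ∧
      DividesIn (AddSubmonoid.closure (generators p)) a 1}.Infinite :=
    Set.infinite_of_injOn_mapsTo (injOn_gen hprime hodd hinj)
      (fun n hn => ⟨isAtomIn_gen hprime hodd hinj hn, dividesIn_gen_one hn (hprime n hn).ne_zero⟩)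
      (Set.Ici_infinite 1)
  exact ⟨fun q => isAtomIn_closure_generators_iff hprime hodd hinj, hone, hlong, hinf,
    not_isBFMIn_of_forall_exists_le_card hone hlong, fun h => hinf (h 1 hone)⟩
end

section
/- Let (p_n)_{n≥1} be the strictly increasing enumeration of all prime numbers, set a_n = (p_n + 1)/p_n², and let S be the additive submonoid of ℚ≥0 generated by {a_n : n ∈ ℕ}. Then S is atomic with set of atoms exactly {a_n : n ∈ ℕ}, and S is an IDF monoid; consequently S is a finite factorization monoid. -/
namespace PuiseuxAux

noncomputable def A (r : ℕ) : ℚ := ((r : ℚ) + 1) / (r : ℚ) ^ 2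

def genSet : Set ℚ := {q : ℚ | ∃ r : ℕ, r.Prime ∧ q = A r}

lemma A_pos {r : ℕ} (hr : r.Prime) : 0 < A r := by
  have h : (0 : ℚ) < (r : ℚ) := by exact_mod_cast hr.pos
  unfold A; positivity

lemma gen_pos {x : ℚ} (hx : x ∈ genSet) : 0 < x := by
  obtain ⟨r, hr, rfl⟩ := hx; exact A_pos hr

lemma den_key {r : ℕ} (hr : r.Prime) (k e : ℕ) (hk : ¬ r ∣ k) (he : 0 < e) :
    r ∣ ((k : ℚ) * ((r : ℚ) + 1) / (r : ℚ) ^ e).den := by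
  set x : ℚ := (k : ℚ) * ((r : ℚ) + 1) / (r : ℚ) ^ e with hx
  have hr0 : (r : ℚ) ≠ 0 := Nat.cast_ne_zero.2 hr.pos.ne'
  have h1 : x * (r : ℚ) ^ e = (k : ℚ) * ((r : ℚ) + 1) := by
    rw [hx]; field_simp
  have hden0 : ((x.den : ℚ)) ≠ 0 := Nat.cast_ne_zero.2 x.den_nz
  have h2 : (x.num : ℚ) * (r : ℚ) ^ e = (k : ℚ) * ((r : ℚ) + 1) * (x.den : ℚ) := by
    have hx' : (x.num : ℚ) = x * (x.den : ℚ) := by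
      exact (div_eq_iff hden0).1 (Rat.num_div_den x)
    rw [hx', mul_right_comm, h1]
  have h3 : x.num * (r : ℤ) ^ e = (k : ℤ) * ((r : ℤ) + 1) * (x.den : ℤ) := by
    exact_mod_cast h2
  have hrZ : Prime (r : ℤ) := Nat.prime_iff_prime_int.1 hr
  have hdvd : (r : ℤ) ∣ (k : ℤ) * ((r : ℤ) + 1) * (x.den : ℤ) := by
    rw [← h3]
    exact Dvd.dvd.mul_left (dvd_pow_self _ he.ne') _
  rcases (hrZ.dvd_mul.1 hdvd) with h | h
  · rcases hrZ.dvd_mul.1 h with h' | h'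
    · exact absurd (Int.natCast_dvd_natCast.1 h') hk
    · exfalso
      have h1' : (r : ℤ) ∣ 1 := (dvd_add_right (dvd_refl _)).1 h'
      have h2' : (r : ℤ) ≤ 1 := Int.le_of_dvd one_pos h1'
      have h3' := hr.one_lt
      omega
  · exact_mod_cast h

lemma den_A_dvd (r : ℕ) : ((A r).den : ℤ) ∣ (r : ℤ) ^ 2 := by
  have h : A r = Rat.divInt ((r : ℤ) + 1) ((r : ℤ) ^ 2) := by
    rw [Rat.divInt_eq_div]; unfold A; push_cast; ring
  rw [h]; exact Rat.den_dvd _ _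

lemma not_dvd_den_gen {r : ℕ} (hr : r.Prime) {y : ℚ} (hy : y ∈ genSet) (hne : y ≠ A r) :
    ¬ r ∣ y.den := by
  obtain ⟨r', hr', rfl⟩ := hy
  intro hdvd
  have h1 : (r : ℤ) ∣ (r' : ℤ) ^ 2 := dvd_trans (Int.natCast_dvd_natCast.2 hdvd) (den_A_dvd r')
  have h2 : r ∣ r' ^ 2 := by exact_mod_cast h1
  have h3 : r ∣ r' := hr.dvd_of_dvd_pow h2
  exact hne (by rw [(Nat.prime_dvd_prime_iff_eq hr hr').1 h3])

lemma not_dvd_den_sum {r : ℕ} (hr : r.Prime) (s : Multiset ℚ) (h : ∀ y ∈ s, ¬ r ∣ y.den) :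
    ¬ r ∣ s.sum.den := by
  induction s using Multiset.induction with
  | empty =>
    simp only [Multiset.sum_zero, Rat.den_ofNat]
    intro hd
    exact hr.one_lt.ne' (Nat.dvd_one.1 hd)
  | cons a s ih =>
    intro hd
    rw [Multiset.sum_cons] at hd
    have := dvd_trans hd (Rat.add_den_dvd a s.sum)
    rcases (Nat.Prime.dvd_mul hr).1 this with h' | h'
    · exact h a (Multiset.mem_cons_self a s) h'
    · exact ih (fun y hy => h y (Multiset.mem_cons_of_mem hy)) h'

lemma dvd_den_add {r : ℕ} (hr : r.Prime) {x t : ℚ} (hx : r ∣ x.den) (ht : ¬ r ∣ t.den) :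
    r ∣ (x + t).den := by
  have h1 : x.den ∣ (x + t).den * t.den := by
    have := Rat.add_den_dvd (x + t) (-t)
    simpa [Rat.den_neg_eq_den] using this
  rcases (Nat.Prime.dvd_mul hr).1 (dvd_trans hx h1) with h | h
  · exact h
  · exact absurd h ht


open AddSubmonoid

noncomputable def S0 : AddSubmonoid ℚ := closure genSet

lemma mem_S0_iff {x : ℚ} : x ∈ S0 ↔ ∃ s : Multiset ℚ, (∀ y ∈ s, y ∈ genSet) ∧ s.sum = x := by
  constructor
  · exact fun hx => AddSubmonoid.exists_multiset_of_mem_closure hx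
  · rintro ⟨s, hs, rfl⟩
    exact multiset_sum_mem _ s (fun y hy => subset_closure (hs y hy))

lemma S0_nonneg {x : ℚ} (hx : x ∈ S0) : 0 ≤ x := by
  obtain ⟨s, hs, rfl⟩ := mem_S0_iff.1 hx
  exact Multiset.sum_nonneg (fun y hy => (gen_pos (hs y hy)).le)

lemma sum_pos_of_ne_zero {s : Multiset ℚ} (hs : ∀ y ∈ s, y ∈ genSet) (h0 : s ≠ 0) :
    0 < s.sum := by
  obtain ⟨a, ha⟩ := Multiset.exists_mem_of_ne_zero h0
  obtain ⟨t, rfl⟩ := Multiset.exists_cons_of_mem ha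
  rw [Multiset.sum_cons]
  have ha : 0 < a := gen_pos (hs a (Multiset.mem_cons_self a t))
  have ht : 0 ≤ t.sum := Multiset.sum_nonneg (fun y hy => (gen_pos (hs y (Multiset.mem_cons_of_mem hy))).le)
  linarith

/-- Decomposition of a sum of generators with respect to the generator `A r`. -/
lemma decomp {r : ℕ} (hr : r.Prime) (s : Multiset ℚ) (hs : ∀ y ∈ s, y ∈ genSet) :
    ∃ t : ℚ, s.sum = (s.count (A r)) • A r + t ∧ 0 ≤ t ∧ ¬ r ∣ t.den ∧
      (t = 0 → s = Multiset.replicate (s.count (A r)) (A r)) := by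
  classical
  set s2 : Multiset ℚ := s.filter (fun a => ¬ a = A r) with hs2
  have hsplit : s.filter (fun a => a = A r) + s2 = s := Multiset.filter_add_not _ s
  have hfe : s.filter (fun a => a = A r) = Multiset.replicate (s.count (A r)) (A r) :=
    Multiset.filter_eq' s (A r)
  have hmem2 : ∀ y ∈ s2, y ∈ genSet ∧ y ≠ A r := by
    intro y hy
    rw [hs2, Multiset.mem_filter] at hy
    exact ⟨hs y hy.1, hy.2⟩
  refine ⟨s2.sum, ?_, ?_, ?_, ?_⟩
  · conv_lhs => rw [← hsplit]
    rw [Multiset.sum_add, hfe, Multiset.sum_replicate]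
  · exact Multiset.sum_nonneg (fun y hy => (gen_pos (hmem2 y hy).1).le)
  · exact not_dvd_den_sum hr s2 (fun y hy => not_dvd_den_gen hr (hmem2 y hy).1 (hmem2 y hy).2)
  · intro ht0
    have h2 : s2 = 0 := by
      by_contra hne
      exact absurd ht0 (sum_pos_of_ne_zero (fun y hy => (hmem2 y hy).1) hne).ne'
    rw [← hfe]
    conv_lhs => rw [← hsplit]
    rw [h2, add_zero]

lemma r_dvd_den_A {r : ℕ} (hr : r.Prime) : r ∣ (A r).den := by
  have h := den_key hr 1 2 (by simpa using hr.one_lt.ne') (by norm_num)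
  simpa [A] using h

lemma gen_is_atom {x : ℚ} (hx : x ∈ genSet) : IsAtomIn S0 x := by
  obtain ⟨r, hr, rfl⟩ := hx
  refine ⟨subset_closure ⟨r, hr, rfl⟩, (A_pos hr).ne', ?_⟩
  intro b c hb hc habc
  obtain ⟨sb, hsb, hsbsum⟩ := mem_S0_iff.1 hb
  obtain ⟨sc, hsc, hscsum⟩ := mem_S0_iff.1 hc
  set s : Multiset ℚ := sb + sc with hsdef
  have hsgen : ∀ y ∈ s, y ∈ genSet := by
    intro y hy
    rcases Multiset.mem_add.1 hy with h | h
    · exact hsb y h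
    · exact hsc y h
  have hssum : s.sum = A r := by rw [hsdef, Multiset.sum_add, hsbsum, hscsum, habc]
  obtain ⟨t, hdec, ht0, htd, htrep⟩ := decomp hr s hsgen
  set m : ℕ := s.count (A r) with hm
  rw [hssum] at hdec
  have hApos := A_pos hr
  have hm1 : m = 1 := by
    rcases Nat.lt_or_ge m 1 with h | h
    · interval_cases m
      · exfalso
        simp only [zero_smul, zero_add] at hdec
        exact htd (hdec ▸ r_dvd_den_A hr)
    · rcases Nat.lt_or_ge m 2 with h2 | h2
      · omega
      · exfalso
        have : (m : ℚ) * A r ≤ A r := by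
          rw [nsmul_eq_mul] at hdec; linarith
        have hm2 : (2 : ℚ) ≤ (m : ℚ) := by exact_mod_cast h2
        nlinarith
  rw [hm1] at hdec htrep
  have ht : t = 0 := by
    rw [one_smul] at hdec; linarith
  have hsrep := htrep ht
  have hcard : Multiset.card sb + Multiset.card sc = 1 := by
    have := congrArg Multiset.card hsrep
    simpa [hsdef] using this
  rcases Nat.add_eq_one_iff.1 hcard with ⟨h1, _⟩ | ⟨_, h1⟩
  · left; rw [← hsbsum, Multiset.card_eq_zero.1 h1, Multiset.sum_zero]
  · right; rw [← hscsum, Multiset.card_eq_zero.1 h1, Multiset.sum_zero]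

lemma atom_in_gen {x : ℚ} (h : IsAtomIn S0 x) : x ∈ genSet := by
  obtain ⟨hx, hx0, hatom⟩ := h
  obtain ⟨s, hs, hsum⟩ := mem_S0_iff.1 hx
  rcases Multiset.empty_or_exists_mem s with h0 | ⟨a, ha⟩
  · exact absurd (by rw [← hsum, h0, Multiset.sum_zero]) hx0
  obtain ⟨t, rfl⟩ := Multiset.exists_cons_of_mem ha
  have hagen := hs a (Multiset.mem_cons_self a t)
  have htmem : t.sum ∈ S0 := mem_S0_iff.2 ⟨t, fun y hy => hs y (Multiset.mem_cons_of_mem hy), rfl⟩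
  have := hatom a t.sum (subset_closure hagen) htmem (by rw [← hsum, Multiset.sum_cons])
  rcases this with h | h
  · exact absurd h (gen_pos hagen).ne'
  · rw [← hsum, Multiset.sum_cons, h, add_zero]; exact hagen


lemma nsmul_A_eq (m r : ℕ) : (m • A r : ℚ) = (m : ℚ) * ((r : ℚ) + 1) / (r : ℚ) ^ 2 := by
  rw [nsmul_eq_mul, A, mul_div_assoc]

lemma divBound {r : ℕ} (hr : r.Prime) {q : ℚ} (hq : DividesIn S0 (A r) q) :
    r ∣ q.den ∨ (r : ℚ) < q := by
  obtain ⟨c, hc, rfl⟩ := hq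
  obtain ⟨s, hs, hsum⟩ := mem_S0_iff.1 hc
  set s' : Multiset ℚ := A r ::ₘ s with hs'
  have hs'gen : ∀ y ∈ s', y ∈ genSet := by
    intro y hy
    rcases Multiset.mem_cons.1 hy with h | h
    · exact h ▸ ⟨r, hr, rfl⟩
    · exact hs y h
  obtain ⟨t, hdec, ht0, htd, _⟩ := decomp hr s' hs'gen
  have hsum' : s'.sum = A r + c := by rw [hs', Multiset.sum_cons, hsum]
  rw [hsum'] at hdec
  set m := s'.count (A r) with hm
  have hmpos : 0 < m := by
    rw [hm, hs']
    exact Multiset.count_pos.2 (Multiset.mem_cons_self _ _)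
  have hr0 : (0 : ℚ) < (r : ℚ) := by exact_mod_cast hr.pos
  by_cases h2 : r ^ 2 ∣ m
  · right
    have hge : (r : ℚ) ^ 2 ≤ (m : ℚ) := by exact_mod_cast Nat.le_of_dvd hmpos h2
    have h3 : (r : ℚ) + 1 ≤ (m : ℚ) * ((r : ℚ) + 1) / (r : ℚ) ^ 2 := by
      rw [le_div_iff₀ (by positivity)]
      nlinarith
    rw [nsmul_A_eq] at hdec
    linarith
  · left
    have hkey : r ∣ (m • A r : ℚ).den := by
      by_cases h1 : r ∣ m
      · obtain ⟨j, hj'⟩ := h1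
        have hj : ¬ r ∣ j := by
          intro hjd
          obtain ⟨i, rfl⟩ := hjd
          exact h2 ⟨i, by rw [hj']; ring⟩
        have heq : (m • A r : ℚ) = (j : ℚ) * ((r : ℚ) + 1) / (r : ℚ) ^ 1 := by
          rw [nsmul_A_eq, hj']; push_cast; field_simp
        rw [heq]
        exact den_key hr j 1 hj one_pos
      · rw [nsmul_A_eq]
        exact den_key hr m 2 h1 (by norm_num)
    have hfin := dvd_den_add hr hkey htd
    rwa [← hdec] at hfin

lemma prime_le_bound {r : ℕ} (hr : r.Prime) {q : ℚ} (hq : DividesIn S0 (A r) q) :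
    r ≤ max q.den ⌈q⌉₊ := by
  rcases divBound hr hq with h | h
  · exact le_trans (Nat.le_of_dvd q.pos h) (le_max_left _ _)
  · refine le_trans ?_ (le_max_right _ _)
    have h2 : (r : ℚ) < (⌈q⌉₊ : ℚ) := lt_of_lt_of_le h (Nat.le_ceil q)
    exact_mod_cast h2.le

lemma idf_S0 : IsIDFIn S0 := by
  intro q hq
  apply Set.Finite.subset ((Set.finite_Iic (max q.den ⌈q⌉₊)).image (fun r : ℕ => A r))
  rintro a ⟨hatom, hdvd⟩
  obtain ⟨r, hr, rfl⟩ := atom_in_gen hatom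
  exact Set.mem_image_of_mem _ (Set.mem_Iic.2 (prime_le_bound hr hdvd))

lemma fact_nonempty {q : ℚ} (hq : q ∈ S0) : (FactorizationsIn S0 q).Nonempty := by
  obtain ⟨s, hs, hsum⟩ := mem_S0_iff.1 hq
  exact ⟨s, fun x hx => gen_is_atom (hs x hx), hsum⟩

lemma ffm_finite {q : ℚ} (hq : q ∈ S0) : (FactorizationsIn S0 q).Finite := by
  classical
  set N : ℕ := max q.den ⌈q⌉₊ with hN
  have hN1 : 0 < N := lt_of_lt_of_le q.pos (le_max_left _ _)
  set B : ℕ := N * ⌈q⌉₊ with hB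
  set D : Finset ℚ := (Finset.Iic N).image (fun r : ℕ => A r) with hD
  apply Set.Finite.subset (((B • D.val).powerset.toFinset : Finset (Multiset ℚ)).finite_toSet)
  intro s hsf
  obtain ⟨hsa, hssum⟩ := hsf
  have hmem : ∀ x ∈ s, ∃ r : ℕ, r.Prime ∧ r ≤ N ∧ x = A r := by
    intro x hx
    obtain ⟨r, hr, rfl⟩ := atom_in_gen (hsa x hx)
    refine ⟨r, hr, ?_, rfl⟩
    have herase : (s.erase (A r)).sum ∈ S0 :=
      mem_S0_iff.2 ⟨s.erase (A r),
        fun y hy => atom_in_gen (hsa y (Multiset.mem_of_mem_erase hy)), rfl⟩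
    have hdvd : DividesIn S0 (A r) q := ⟨(s.erase (A r)).sum, herase, by
      rw [← hssum]
      conv_lhs => rw [← Multiset.cons_erase hx]
      rw [Multiset.sum_cons]⟩
    exact prime_le_bound hr hdvd
  have hlow : ∀ x ∈ s, (1 : ℚ) / (N : ℚ) ≤ x := by
    intro x hx
    obtain ⟨r, hr, hrN, rfl⟩ := hmem x hx
    have hrpos : (0 : ℚ) < (r : ℚ) := by exact_mod_cast hr.pos
    have h1 : (1 : ℚ) / (N : ℚ) ≤ 1 / (r : ℚ) := by
      apply one_div_le_one_div_of_le hrpos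
      exact_mod_cast hrN
    refine h1.trans ?_
    rw [A, div_le_div_iff₀ hrpos (by positivity)]
    nlinarith
  have hcard : Multiset.card s ≤ B := by
    have h1 : (Multiset.card s) • ((1 : ℚ) / (N : ℚ)) ≤ s.sum :=
      Multiset.card_nsmul_le_sum hlow
    rw [hssum, nsmul_eq_mul] at h1
    have hNpos : (0 : ℚ) < (N : ℚ) := by exact_mod_cast hN1
    have h2 : (Multiset.card s : ℚ) ≤ (N : ℚ) * q := by
      rw [mul_one_div] at h1
      calc (Multiset.card s : ℚ) = (Multiset.card s : ℚ) / (N : ℚ) * N := by field_simp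
      _ ≤ q * N := mul_le_mul_of_nonneg_right h1 hNpos.le
      _ = N * q := mul_comm _ _
    have h3 : (Multiset.card s : ℚ) ≤ ((B : ℕ) : ℚ) := by
      refine h2.trans ?_
      rw [hB]; push_cast
      exact mul_le_mul_of_nonneg_left (Nat.le_ceil q) (by positivity)
    exact_mod_cast h3
  rw [Finset.mem_coe, Multiset.mem_toFinset, Multiset.mem_powerset, Multiset.le_iff_count]
  intro a
  by_cases ha : a ∈ s
  · have haD : a ∈ D := by
      obtain ⟨r, hr, hrN, rfl⟩ := hmem a ha
      exact Finset.mem_image.2 ⟨r, Finset.mem_Iic.2 hrN, rfl⟩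
    rw [Multiset.count_nsmul, Multiset.count_eq_one_of_mem D.nodup (Finset.mem_def.1 haD),
      mul_one]
    exact le_trans (Multiset.count_le_card a s) hcard
  · rw [Multiset.count_eq_zero_of_notMem ha]
    exact Nat.zero_le _

end PuiseuxAux

/-- Let `(p_n)_{n ≥ 1}` be the strictly increasing enumeration of all primes,
`a_n = (p_n + 1)/p_n²`, and let `S` be the additive submonoid of `ℚ≥0` generated by the
`a_n`. Then `S` is atomic with set of atoms exactly `{a_n : n ≥ 1}`, and `S` is an IDF
monoid; consequently `S` is a finite factorization monoid. -/
theorem puiseux_atomic_idf_ffm (p : ℕ → ℕ)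
    (hprime : ∀ n : ℕ, 1 ≤ n → (p n).Prime)
    (hmono : ∀ m n : ℕ, 1 ≤ m → m < n → p m < p n)
    (hall : ∀ q : ℕ, q.Prime → ∃ n : ℕ, 1 ≤ n ∧ p n = q)
    (S : AddSubmonoid ℚ)
    (hS : S = AddSubmonoid.closure
      {q : ℚ | ∃ n : ℕ, 1 ≤ n ∧ q = ((p n : ℚ) + 1) / (p n : ℚ) ^ 2}) :
    (∀ q ∈ S, (FactorizationsIn S q).Nonempty) ∧
    (∀ q : ℚ, IsAtomIn S q ↔ ∃ n : ℕ, 1 ≤ n ∧ q = ((p n : ℚ) + 1) / (p n : ℚ) ^ 2) ∧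
    IsIDFIn S ∧
    (∀ q ∈ S, (FactorizationsIn S q).Nonempty ∧ (FactorizationsIn S q).Finite) := by
  have hgen : {q : ℚ | ∃ n : ℕ, 1 ≤ n ∧ q = ((p n : ℚ) + 1) / (p n : ℚ) ^ 2}
      = PuiseuxAux.genSet := by
    ext x
    constructor
    · rintro ⟨n, hn, rfl⟩
      exact ⟨p n, hprime n hn, rfl⟩
    · rintro ⟨r, hr, rfl⟩
      obtain ⟨n, hn, hpn⟩ := hall r hr
      exact ⟨n, hn, by rw [hpn]; rfl⟩
  have hS0 : S = PuiseuxAux.S0 := by rw [hS, hgen]; rfl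
  rw [hS0]
  refine ⟨fun q hq => PuiseuxAux.fact_nonempty hq, ?_, PuiseuxAux.idf_S0,
    fun q hq => ⟨PuiseuxAux.fact_nonempty hq, PuiseuxAux.ffm_finite hq⟩⟩
  intro q
  constructor
  · intro h
    have h2 := PuiseuxAux.atom_in_gen h
    rw [← hgen] at h2
    exact h2
  · intro h
    exact PuiseuxAux.gen_is_atom (hgen ▸ h)
end
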